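/- arXiv:1509.04971 — 7 statements merged into one kernel-verified Lean document; each statement's English description precedes it below -/
import Mathlib

section
/- Let ℓ>0, r_+>0 and a∈ℝ with 0<|a|<ℓ and r_+² < |a|ℓ, let m∈ℤ, Ξ := 1−a²/ℓ² and ω_+ := maΞ/(r_+²+a²). Let δ>0 and let ω_R:(−δ,δ)→ℝ be differentiable with ω_R(0)=ω_+ and ω_R(0)·ω_R'(0) < 0. For ε∈(−δ,δ) and λ∈ℝ define E(ε,λ) := (ω_R(ε)² + ε²) − ω_R(ε)·ω_+ + mλ(ω_+ − ω_R(ε)). Then there exists ε₀∈(0,δ) such that E(ε,λ) < 0 for all ε with 0<ε<ε₀ and all λ with −(ℓ+a)/ℓ² < λ < (ℓ−a)/ℓ². -/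
/-!
Write `u = ω_R(ε) - ω_+` and `κ = ω_+ - mλ`, so that `E(ε, λ) = u κ + u² + ε²`. Superradiance
together with the violation of the Hawking–Reall bound makes `κ ω_R'(0)` negative and bounded away
from zero uniformly over the timelike range of `λ`. Since `u = ε ω_R'(0) + o(ε)`, this gives
`u κ ≤ -c ε` with `c > 0`, while `u² + ε² = O(ε²)`.
-/
open Set Filter Topology

lemma eventually_abs_sub_le_of_hasDerivAt {f : ℝ → ℝ} {d η : ℝ} (hf : HasDerivAt f d 0)
    (hη : 0 < η) : ∀ᶠ ε in 𝓝[>] 0, |f ε - f 0 - ε * d| ≤ η * ε := by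
  filter_upwards [self_mem_nhdsWithin, nhdsWithin_le_nhds (hf.isLittleO.def hη)]
    with ε (hε : 0 < ε) h
  simpa [abs_of_pos hε] using h

lemma exists_Ioo_forall_of_eventually_nhdsGT {p : ℝ → Prop} (h : ∀ᶠ ε in 𝓝[>] 0, p ε)
    {δ : ℝ} (hδ : 0 < δ) : ∃ ε₀ ∈ Ioo 0 δ, ∀ ε, 0 < ε → ε < ε₀ → p ε := by
  obtain ⟨u, hu, hpu⟩ := (nhdsGT_basis (0 : ℝ)).eventually_iff.1 h
  refine ⟨min u (δ / 2), ⟨lt_min hu (half_pos hδ), by linarith [min_le_right u (δ / 2)]⟩,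
    fun ε hε hεu => hpu ⟨hε, hεu.trans_le (min_le_left _ _)⟩⟩

lemma mul_add_sq_add_sq_neg {u κ d c ε : ℝ} (hε : 0 < ε) (hu : |u - ε * d| ≤ |d| / 2 * ε)
    (hκ : κ * d ≤ c) (hsmall : ε * (2 * (9 / 4 * d ^ 2 + 1)) < -c) :
    u * κ + u ^ 2 + ε ^ 2 < 0 := by
  have hlin : u * κ ≤ ε * (κ * d) / 2 :=
    calc u * κ = ε * (κ * d) + (u - ε * d) * κ := by ring
      _ ≤ ε * (κ * d) + |u - ε * d| * |κ| := by
        rw [← abs_mul]; gcongr; exact le_abs_self _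
      _ ≤ ε * (κ * d) + |d| / 2 * ε * |κ| := by gcongr
      _ = ε * (κ * d) + ε * |κ * d| / 2 := by rw [abs_mul]; ring
      _ = ε * (κ * d) / 2 := by
        rw [abs_of_neg (by nlinarith : κ * d < 0)]; ring
  have hsq : u ^ 2 ≤ (3 / 2 * |d| * ε) ^ 2 := by
    refine sq_le_sq' ?_ ?_ <;>
      nlinarith [abs_le.1 hu, abs_nonneg d, neg_abs_le d, le_abs_self d]
  nlinarith [sq_abs d]

lemma eventually_mul_add_sq_add_sq_neg {f : ℝ → ℝ} {d c : ℝ} (hf : HasDerivAt f d 0)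
    (hd : d ≠ 0) (hc : c < 0) :
    ∀ᶠ ε in 𝓝[>] 0, ∀ κ, κ * d ≤ c → (f ε - f 0) * κ + (f ε - f 0) ^ 2 + ε ^ 2 < 0 := by
  have hsmall : Ioo 0 (-c / (2 * (9 / 4 * d ^ 2 + 1))) ∈ 𝓝[>] (0 : ℝ) :=
    Ioo_mem_nhdsGT (div_pos (neg_pos.2 hc) (by positivity))
  filter_upwards [eventually_abs_sub_le_of_hasDerivAt hf (half_pos (abs_pos.2 hd)), hsmall]
    with ε hu ⟨hε, hεc⟩ κ hκ
  exact mul_add_sq_add_sq_neg hε hu hκ ((lt_div_iff₀ (by positivity)).1 hεc)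

lemma mul_lt_abs_mul_sub_abs_div_sq {ℓ a lam : ℝ} (ha0 : 0 < |a|) (ha : |a| < ℓ)
    (hlam : lam ∈ Ioo (-(ℓ + a) / ℓ ^ 2) ((ℓ - a) / ℓ ^ 2)) :
    a * lam < |a| * (ℓ - |a|) / ℓ ^ 2 := by
  have hℓ2 : 0 < ℓ ^ 2 := pow_pos (ha0.trans ha) 2
  obtain ⟨hl, hr⟩ := hlam
  rw [div_lt_iff₀ hℓ2] at hl
  rw [lt_div_iff₀ hℓ2] at hr
  rw [lt_div_iff₀ hℓ2]
  rcases lt_or_gt_of_ne (abs_pos.1 ha0) with hneg | hpos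
  · rw [abs_of_neg hneg]; nlinarith
  · rw [abs_of_pos hpos]; nlinarith

lemma one_sub_sq_div_sq_pos {ℓ a : ℝ} (ha : |a| < ℓ) : 0 < 1 - a ^ 2 / ℓ ^ 2 := by
  have hℓ : 0 < ℓ := (abs_nonneg a).trans_lt ha
  rw [sub_pos, div_lt_one (by positivity)]
  exact sq_lt_sq.2 (by rwa [abs_of_pos hℓ])

/-- The left side is positive exactly when `r_+² < |a| ℓ`. -/
lemma hawkingReall_gap_lt_mul_sub {ℓ rp a lam : ℝ} (ha0 : 0 < |a|) (ha : |a| < ℓ)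
    (hlam : lam ∈ Ioo (-(ℓ + a) / ℓ ^ 2) ((ℓ - a) / ℓ ^ 2)) :
    |a| * (ℓ - |a|) * (|a| * ℓ - rp ^ 2) / (ℓ ^ 2 * (rp ^ 2 + a ^ 2)) <
      a * (a * (1 - a ^ 2 / ℓ ^ 2) / (rp ^ 2 + a ^ 2) - lam) := by
  have hℓ : ℓ ≠ 0 := (ha0.trans ha).ne'
  have hra : rp ^ 2 + a ^ 2 ≠ 0 := by have := abs_pos.1 ha0; positivity
  have hsplit : a * (a * (1 - a ^ 2 / ℓ ^ 2) / (rp ^ 2 + a ^ 2)) =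
      |a| * (ℓ - |a|) * (|a| * ℓ - rp ^ 2) / (ℓ ^ 2 * (rp ^ 2 + a ^ 2)) +
        |a| * (ℓ - |a|) / ℓ ^ 2 := by
    field_simp
    rw [← sq_abs a]
    ring
  linarith [mul_lt_abs_mul_sub_abs_div_sq ha0 ha hlam]

theorem stmt_1_general (ℓ rp a : ℝ)
    (ha0 : 0 < |a|) (ha : |a| < ℓ) (hHR : rp ^ 2 < |a| * ℓ)
    (m : ℤ) (Ξ ωp : ℝ) (hΞ : Ξ = 1 - a ^ 2 / ℓ ^ 2)
    (hωp : ωp = (m : ℝ) * a * Ξ / (rp ^ 2 + a ^ 2))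
    (δ : ℝ) (hδ : 0 < δ) (ωR : ℝ → ℝ)
    (hdiff : ∀ ε ∈ Ioo (-δ) δ, DifferentiableAt ℝ ωR ε)
    (hω0 : ωR 0 = ωp) (hsup : ωR 0 * deriv ωR 0 < 0) :
    ∃ ε₀ ∈ Ioo 0 δ, ∀ ε : ℝ, 0 < ε → ε < ε₀ → ∀ lam : ℝ,
      -(ℓ + a) / ℓ ^ 2 < lam → lam < (ℓ - a) / ℓ ^ 2 →
      (ωR ε ^ 2 + ε ^ 2) - ωR ε * ωp + (m : ℝ) * lam * (ωp - ωR ε) < 0 := by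
  set d := deriv ωR 0
  set g := |a| * (ℓ - |a|) * (|a| * ℓ - rp ^ 2) / (ℓ ^ 2 * (rp ^ 2 + a ^ 2))
  have ha' : a ≠ 0 := abs_pos.1 ha0
  have hℓ : 0 < ℓ := ha0.trans ha
  have hg : 0 < g :=
    div_pos (mul_pos (mul_pos ha0 (sub_pos.2 ha)) (sub_pos.2 hHR)) (by positivity)
  have hΞ0 : 0 < Ξ / (rp ^ 2 + a ^ 2) := div_pos (hΞ ▸ one_sub_sq_div_sq_pos ha) (by positivity)
  have hmad : (m : ℝ) * a * d < 0 := by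
    have : ωR 0 * d = (m * a * d) * (Ξ / (rp ^ 2 + a ^ 2)) := by rw [hω0, hωp]; ring
    exact neg_of_mul_neg_left (this ▸ hsup) hΞ0.le
  have hκ : ∀ lam ∈ Ioo (-(ℓ + a) / ℓ ^ 2) ((ℓ - a) / ℓ ^ 2),
      (ωp - m * lam) * d ≤ m * a * d * g / a ^ 2 := by
    intro lam hlam
    have hfac : (ωp - m * lam) * d * a ^ 2 =
        (m * a * d) * (a * (a * (1 - a ^ 2 / ℓ ^ 2) / (rp ^ 2 + a ^ 2) - lam)) := by
      rw [hωp, hΞ]; ring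
    rw [le_div_iff₀ (by positivity), hfac]
    exact mul_le_mul_of_nonpos_left (hawkingReall_gap_lt_mul_sub ha0 ha hlam).le hmad.le
  have hf : HasDerivAt ωR d 0 := (hdiff 0 ⟨neg_lt_zero.2 hδ, hδ⟩).hasDerivAt
  obtain ⟨ε₀, hε₀, H⟩ := exists_Ioo_forall_of_eventually_nhdsGT
    (eventually_mul_add_sq_add_sq_neg (c := m * a * d * g / a ^ 2) hf
      (right_ne_zero_of_mul hmad.ne)
      (div_neg_of_neg_of_pos (mul_neg_of_neg_of_pos hmad hg) (by positivity))) hδ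
  refine ⟨ε₀, hε₀, fun ε hε hεε₀ lam hl hr => ?_⟩
  have := H ε hε hεε₀ (ωp - m * lam) (hκ lam ⟨hl, hr⟩)
  rw [hω0] at this
  linarith

theorem stmt_1 (ℓ rp a : ℝ) (hℓ : 0 < ℓ) (hrp : 0 < rp)
    (ha0 : 0 < |a|) (ha : |a| < ℓ) (hHR : rp ^ 2 < |a| * ℓ)
    (m : ℤ) (Ξ ωp : ℝ) (hΞ : Ξ = 1 - a ^ 2 / ℓ ^ 2)
    (hωp : ωp = (m : ℝ) * a * Ξ / (rp ^ 2 + a ^ 2))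
    (δ : ℝ) (hδ : 0 < δ) (ωR : ℝ → ℝ)
    (hdiff : ∀ ε ∈ Ioo (-δ) δ, DifferentiableAt ℝ ωR ε)
    (hω0 : ωR 0 = ωp) (hsup : ωR 0 * deriv ωR 0 < 0) :
    ∃ ε₀ ∈ Ioo 0 δ, ∀ ε : ℝ, 0 < ε → ε < ε₀ → ∀ lam : ℝ,
      -(ℓ + a) / ℓ ^ 2 < lam → lam < (ℓ - a) / ℓ ^ 2 →
      (ωR ε ^ 2 + ε ^ 2) - ωR ε * ωp + (m : ℝ) * lam * (ωp - ωR ε) < 0 :=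
  stmt_1_general ℓ rp a ha0 ha hHR m Ξ ωp hΞ hωp δ hδ ωR hdiff hω0 hsup
end

section
/- For every r_cut ≥ r_+ and every smooth f:[r_cut,∞)→ℂ with r^{1/2}f(r)→0 as r→∞ and ∫_{r_cut}^∞ (Δ_-(r)/(r²+a²))|f'(r)|² dr < ∞, one has (1/(4ℓ²))·∫_{r_cut}^∞ |f(r)|² dr ≤ ∫_{r_cut}^∞ (Δ_-(r)/(r²+a²))|f'(r)|² dr. -/
open Real MeasureTheory Filter Set

private lemma amgm_aux (x A B : ℝ) (hx : 0 ≤ x) (hA : 0 ≤ A) (hB : 0 ≤ B)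
    (h : x ^ 2 ≤ 4 * A * B) : x ≤ A + B := by
  nlinarith [sq_nonneg (A - B), sq_nonneg (A + B)]

set_option maxHeartbeats 1000000 in
theorem stmt_2 (ℓ M a rp : ℝ) (hℓ : 0 < ℓ) (hM : 0 < M) (ha : |a| < ℓ) (hrp : 0 < rp)
    (Δ : ℝ → ℝ) (hΔ : ∀ r, Δ r = (r ^ 2 + a ^ 2) * (1 + r ^ 2 / ℓ ^ 2) - 2 * M * r)
    (hroot : Δ rp = 0) (hmax : ∀ r, Δ r = 0 → r ≤ rp) (hd : 0 < deriv Δ rp)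
    (rcut : ℝ) (hrcut : rp ≤ rcut) (f : ℝ → ℂ)
    (hf : ContDiffOn ℝ (⊤ : ℕ∞) f (Ici rcut))
    (hdecay : Tendsto (fun r : ℝ => ((Real.sqrt r : ℝ) : ℂ) * f r) atTop (nhds 0))
    (hfin : IntegrableOn (fun r => Δ r / (r ^ 2 + a ^ 2) * ‖deriv f r‖ ^ 2) (Ioi rcut)) :
    1 / (4 * ℓ ^ 2) * ∫ r in Ioi rcut, ‖f r‖ ^ 2 ≤
      ∫ r in Ioi rcut, Δ r / (r ^ 2 + a ^ 2) * ‖deriv f r‖ ^ 2 := by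
  have hl2 : (0:ℝ) < ℓ ^ 2 := by positivity
  set c := rcut with hc
  -- root equation, polynomial form
  have hM2 : (rp ^ 2 + a ^ 2) * (ℓ ^ 2 + rp ^ 2) = 2 * M * rp * ℓ ^ 2 := by
    have h0 := hroot
    rw [hΔ rp] at h0
    field_simp at h0
    nlinarith [h0]
  -- derivative of Δ at rp
  have hDeq : Δ = fun r => (r ^ 2 + a ^ 2) * (1 + r ^ 2 / ℓ ^ 2) - 2 * M * r := funext hΔ
  have hder : HasDerivAt Δ
      (2 * rp * (1 + rp ^ 2 / ℓ ^ 2) + (rp ^ 2 + a ^ 2) * (2 * rp / ℓ ^ 2) - 2 * M) rp := by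
    rw [hDeq]
    have h1 : HasDerivAt (fun r : ℝ => r ^ 2 + a ^ 2) (2 * rp) rp := by
      simpa using (hasDerivAt_pow 2 rp).add_const (a ^ 2)
    have h2 : HasDerivAt (fun r : ℝ => 1 + r ^ 2 / ℓ ^ 2) (2 * rp / ℓ ^ 2) rp := by
      simpa using ((hasDerivAt_pow 2 rp).div_const (ℓ ^ 2)).const_add 1
    have h3 : HasDerivAt (fun r : ℝ => 2 * M * r) (2 * M) rp := by
      simpa using (hasDerivAt_id rp).const_mul (2 * M)
    exact (h1.mul h2).sub h3
  have hd' : 0 < 2 * rp * (1 + rp ^ 2 / ℓ ^ 2) + (rp ^ 2 + a ^ 2) * (2 * rp / ℓ ^ 2) - 2 * M := by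
    rwa [hder.deriv] at hd
  have hne : (ℓ:ℝ) ^ 2 ≠ 0 := ne_of_gt hl2
  -- the quantity Q(rp) = ℓ²·rp·Δ'(rp)
  have hQ : 0 < 3 * rp ^ 4 + ℓ ^ 2 * rp ^ 2 + a ^ 2 * rp ^ 2 - a ^ 2 * ℓ ^ 2 := by
    have hN : 0 < 2 * rp * (ℓ ^ 2 + rp ^ 2) + (rp ^ 2 + a ^ 2) * (2 * rp) - 2 * M * ℓ ^ 2 := by
      have heq : 2 * rp * (1 + rp ^ 2 / ℓ ^ 2) + (rp ^ 2 + a ^ 2) * (2 * rp / ℓ ^ 2) - 2 * M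
          = (2 * rp * (ℓ ^ 2 + rp ^ 2) + (rp ^ 2 + a ^ 2) * (2 * rp) - 2 * M * ℓ ^ 2) / ℓ ^ 2 := by
        field_simp
      rw [heq] at hd'
      exact (div_pos_iff.mp hd').resolve_right (fun h => absurd h.2 (not_lt.2 hl2.le)) |>.1
    nlinarith [mul_pos hrp hN, hM2]
  -- KEY pointwise bound : (r-rp)²(r²+a²) ≤ ℓ²·Δ r for r ≥ rp
  have hΔ' : ∀ r : ℝ, ℓ ^ 2 * Δ r = (r ^ 2 + a ^ 2) * (ℓ ^ 2 + r ^ 2) - 2 * M * r * ℓ ^ 2 := by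
    intro r; rw [hΔ r]; field_simp
  have key : ∀ r : ℝ, rp ≤ r → (r - rp) ^ 2 * (r ^ 2 + a ^ 2) ≤ ℓ ^ 2 * Δ r := by
    intro r hr
    have hrr : 0 ≤ r - rp := sub_nonneg.2 hr
    have hident : rp * (ℓ ^ 2 * Δ r - (r - rp) ^ 2 * (r ^ 2 + a ^ 2))
        = (r - rp) * (3 * rp ^ 4 + ℓ ^ 2 * rp ^ 2 + a ^ 2 * rp ^ 2 - a ^ 2 * ℓ ^ 2)
          + (r - rp) ^ 2 * (2 * rp ^ 2 * (r + rp) + rp * (ℓ ^ 2 + rp ^ 2)) := by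
      rw [hΔ' r]
      linear_combination r * hM2
    have h1 : 0 ≤ (r - rp) * (3 * rp ^ 4 + ℓ ^ 2 * rp ^ 2 + a ^ 2 * rp ^ 2 - a ^ 2 * ℓ ^ 2) :=
      mul_nonneg hrr hQ.le
    have h2 : 0 ≤ (r - rp) ^ 2 * (2 * rp ^ 2 * (r + rp) + rp * (ℓ ^ 2 + rp ^ 2)) := by
      have h0r : 0 < r := lt_of_lt_of_le hrp hr
      positivity
    nlinarith [hident, h1, h2, hrp]
  -- positivity of Δ and of the RHS integrand on Ioi c
  have hΔnn : ∀ r ∈ Ioi c, 0 ≤ Δ r := by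
    intro r hr
    have hr' : rp ≤ r := le_trans hrcut (le_of_lt hr)
    nlinarith [key r hr', sq_nonneg (r - rp), sq_nonneg r, sq_nonneg a,
      mul_pos hrp (lt_of_lt_of_le hrp hr')]
  have hGnn : ∀ r ∈ Ioi c, 0 ≤ Δ r / (r ^ 2 + a ^ 2) * ‖deriv f r‖ ^ 2 := by
    intro r hr
    have h0r : 0 < r := lt_of_lt_of_le hrp (le_trans hrcut (le_of_lt hr))
    have : 0 < r ^ 2 + a ^ 2 := by positivity
    exact mul_nonneg (div_nonneg (hΔnn r hr) this.le) (sq_nonneg _)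
  have hRHSnn : 0 ≤ ∫ r in Ioi c, Δ r / (r ^ 2 + a ^ 2) * ‖deriv f r‖ ^ 2 :=
    setIntegral_nonneg measurableSet_Ioi hGnn
  by_cases hX : IntegrableOn (fun r => ‖f r‖ ^ 2) (Ioi c) volume
  swap
  · rw [integral_undef hX]
    simpa using hRHSnn
  -- MAIN CASE
  have hc0 : 0 < c := lt_of_lt_of_le hrp hrcut
  -- continuity data
  have hfc : ContinuousOn f (Ici c) := hf.continuousOn
  set φ : ℝ → ℂ := derivWithin f (Ici c) with hφ
  have hφc : ContinuousOn φ (Ici c) :=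
    hf.continuousOn_derivWithin (uniqueDiffOn_Ici c) (by simp)
  have hderiv_eq : ∀ r ∈ Ioi c, deriv f r = φ r := by
    intro r hr
    exact (derivWithin_of_mem_nhds (Ici_mem_nhds hr)).symm
  have hdiffat : ∀ r ∈ Ioi c, HasDerivAt f (deriv f r) r := by
    intro r hr
    have : ContDiffAt ℝ (⊤ : ℕ∞) f r := hf.contDiffAt (Ici_mem_nhds hr)
    exact (this.differentiableAt (by simp)).hasDerivAt
  -- functions
  set u : ℝ → ℝ := fun r => ‖f r‖ ^ 2 with hu
  set G : ℝ → ℝ := fun r => Δ r / (r ^ 2 + a ^ 2) * ‖deriv f r‖ ^ 2 with hG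
  set g : ℝ → ℝ := fun r => (r - c) * ((f r).re * (deriv f r).re + (f r).im * (deriv f r).im)
    with hg
  set gφ : ℝ → ℝ := fun r => (r - c) * ((f r).re * (φ r).re + (f r).im * (φ r).im) with hgφ
  have hg_eq : EqOn g gφ (Ioi c) := by
    intro r hr; simp only [hg, hgφ, hderiv_eq r hr]
  -- pointwise bound : 2 |g r| ≤ u r / 2 + 2 ℓ² G r on Ioi c
  have hptw : ∀ r ∈ Ioi c, 2 * |g r| ≤ u r / 2 + 2 * ℓ ^ 2 * G r := by
    intro r hr
    have hrc : rp ≤ r := le_trans hrcut (le_of_lt hr)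
    have h0r : 0 < r := lt_of_lt_of_le hrp hrc
    have hra : 0 < r ^ 2 + a ^ 2 := by positivity
    have hkey : (r - c) ^ 2 * (r ^ 2 + a ^ 2) ≤ ℓ ^ 2 * Δ r := by
      refine le_trans ?_ (key r hrc)
      have h1 : 0 ≤ r - c := le_of_lt (sub_pos.2 hr)
      have h2 : r - c ≤ r - rp := by linarith
      have := mul_le_mul (pow_le_pow_left₀ h1 h2 2) (le_refl (r ^ 2 + a ^ 2)) hra.le
        (sq_nonneg (r - rp))
      simpa using this
    have hkey2 : (r - c) ^ 2 ≤ ℓ ^ 2 * (Δ r / (r ^ 2 + a ^ 2)) := by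
      rw [← mul_div_assoc]
      exact (le_div_iff₀ hra).2 hkey
    -- abbreviations
    set p := (f r).re; set q := (f r).im
    set p' := (deriv f r).re; set q' := (deriv f r).im
    have hun : u r = p ^ 2 + q ^ 2 := by
      simp only [hu, Complex.sq_norm, Complex.normSq_apply]; ring
    have hn' : ‖deriv f r‖ ^ 2 = p' ^ 2 + q' ^ 2 := by
      simp only [Complex.sq_norm, Complex.normSq_apply]; ring
    have hCS : (p * p' + q * q') ^ 2 ≤ (p ^ 2 + q ^ 2) * (p' ^ 2 + q' ^ 2) := by
      nlinarith [sq_nonneg (p * q' - q * p')]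
    have hW : 0 ≤ Δ r / (r ^ 2 + a ^ 2) := div_nonneg (hΔnn r hr) hra.le
    refine amgm_aux _ _ _ (by positivity) (by positivity)
      (by positivity)  ?_
    · -- (2|g r|)² ≤ 4 · (u r / 2) · (2 ℓ² G r)
      have hg2 : (2 * |g r|) ^ 2 = 4 * (r - c) ^ 2 * (p * p' + q * q') ^ 2 := by
        rw [mul_pow, sq_abs]; simp only [hg]; ring
      rw [hg2]
      have step1 : 4 * (r - c) ^ 2 * (p * p' + q * q') ^ 2
          ≤ 4 * (r - c) ^ 2 * ((p ^ 2 + q ^ 2) * (p' ^ 2 + q' ^ 2)) := by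
        apply mul_le_mul_of_nonneg_left hCS (by positivity)
      refine le_trans step1 ?_
      have step2 : 4 * (r - c) ^ 2 * ((p ^ 2 + q ^ 2) * (p' ^ 2 + q' ^ 2))
          ≤ 4 * (ℓ ^ 2 * (Δ r / (r ^ 2 + a ^ 2))) * ((p ^ 2 + q ^ 2) * (p' ^ 2 + q' ^ 2)) := by
        apply mul_le_mul_of_nonneg_right (by linarith [hkey2]) (by positivity)
      refine le_trans step2 (le_of_eq ?_)
      simp only [hG, hun, hn']
      ring
  -- integrability of g
  have hmeas_g : AEStronglyMeasurable g (volume.restrict (Ioi c)) := by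
    have hcont : ContinuousOn gφ (Ici c) := by
      apply ContinuousOn.mul
      · exact (continuous_id.sub continuous_const).continuousOn
      · exact ((Complex.continuous_re.comp_continuousOn hfc).mul
          (Complex.continuous_re.comp_continuousOn hφc)).add
          ((Complex.continuous_im.comp_continuousOn hfc).mul
          (Complex.continuous_im.comp_continuousOn hφc))
    have : AEStronglyMeasurable gφ (volume.restrict (Ioi c)) :=
      (hcont.mono Ioi_subset_Ici_self).aestronglyMeasurable measurableSet_Ioi
    exact this.congr (ae_restrict_of_forall_mem measurableSet_Ioi
      (fun r hr => (hg_eq hr).symm))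
  have hbound_int : Integrable (fun r => u r / 4 + ℓ ^ 2 * G r / 2 + (u r / 4 + ℓ ^ 2 * G r / 2))
      (volume.restrict (Ioi c)) := by
    have h1 : Integrable u (volume.restrict (Ioi c)) := hX
    have h2 : Integrable G (volume.restrict (Ioi c)) := hfin
    exact (((h1.const_mul (1/4 : ℝ)).add ((h2.const_mul (ℓ ^ 2 / 2)))).add
      ((h1.const_mul (1/4 : ℝ)).add ((h2.const_mul (ℓ ^ 2 / 2))))).congr
      (by filter_upwards with r; simp only [Pi.add_apply]; ring)
  have hgint : IntegrableOn g (Ioi c) volume := by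
    refine Integrable.mono' (g := fun r => u r / 4 + ℓ ^ 2 * G r) ?_ hmeas_g ?_
    · have h1 : Integrable u (volume.restrict (Ioi c)) := hX
      have h2 : Integrable G (volume.restrict (Ioi c)) := hfin
      exact ((h1.const_mul (1/4 : ℝ)).add (h2.const_mul (ℓ ^ 2))).congr
        (by filter_upwards with r; simp only [Pi.add_apply]; ring)
    · refine ae_restrict_of_forall_mem measurableSet_Ioi (fun r hr => ?_)
      have := hptw r hr
      rw [Real.norm_eq_abs]
      linarith
  -- FTC on [c, A]
  have hFTC : ∀ A : ℝ, c < A →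
      (∫ r in c..A, u r) + 2 * (∫ r in c..A, g r) = (A - c) * u A := by
    intro A hA
    have hcA : c ≤ A := le_of_lt hA
    -- F r = (r-c) * u r
    set F : ℝ → ℝ := fun r => (r - c) * u r with hF
    have hFcont : ContinuousOn F (Icc c A) := by
      apply ContinuousOn.mul
      · exact (continuous_id.sub continuous_const).continuousOn
      · exact ((hfc.mono (Icc_subset_Ici_self)).norm.pow 2)
    have hFderiv : ∀ x ∈ Ioo c A, HasDerivAt F (u x + 2 * g x) x := by
      intro x hx
      have hx' : x ∈ Ioi c := hx.1
      have hfx := hdiffat x hx'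
      have hp : HasDerivAt (fun r => (f r).re) ((deriv f x).re) x := by
        simpa [Function.comp_def] using ((Complex.reCLM.hasFDerivAt (x := f x)).comp_hasDerivAt x hfx)
      have hq : HasDerivAt (fun r => (f r).im) ((deriv f x).im) x := by
        simpa [Function.comp_def] using ((Complex.imCLM.hasFDerivAt (x := f x)).comp_hasDerivAt x hfx)
      have hueq : u = fun r => (f r).re ^ 2 + (f r).im ^ 2 := by
        funext r
        simp only [hu, Complex.sq_norm, Complex.normSq_apply]; ring
      have huder : HasDerivAt u
          (2 * (f x).re * (deriv f x).re + 2 * (f x).im * (deriv f x).im) x := by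
        rw [hueq]
        have := (hp.pow 2).add (hq.pow 2)
        exact this.congr_deriv (by norm_num <;> ring)
      have hFd : HasDerivAt F
          (1 * u x + (x - c) * (2 * (f x).re * (deriv f x).re + 2 * (f x).im * (deriv f x).im))
          x := ((hasDerivAt_id x).sub_const c).mul huder
      have : u x + 2 * g x = 1 * u x + (x - c) *
          (2 * (f x).re * (deriv f x).re + 2 * (f x).im * (deriv f x).im) := by
        simp only [hg]; ring
      rw [this]
      exact hFd
    have hint1 : IntervalIntegrable u volume c A := by
      apply ContinuousOn.intervalIntegrable
      rw [uIcc_of_le hcA]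
      exact (hfc.mono Icc_subset_Ici_self).norm.pow 2
    have hint2 : IntervalIntegrable g volume c A := by
      rw [intervalIntegrable_iff_integrableOn_Ioc_of_le hcA]
      exact hgint.mono_set (Ioc_subset_Ioi_self)
    have hint : IntervalIntegrable (fun r => u r + 2 * g r) volume c A :=
      hint1.add (hint2.const_mul 2)
    have := intervalIntegral.integral_eq_sub_of_hasDerivAt_of_le hcA hFcont hFderiv hint
    rw [intervalIntegral.integral_add hint1 (hint2.const_mul 2),
      intervalIntegral.integral_const_mul] at this
    simp only [hF] at this
    rw [this]; simp
  -- limits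
  have hT1 : Tendsto (fun A => ∫ r in c..A, u r) atTop (nhds (∫ r in Ioi c, u r)) :=
    intervalIntegral_tendsto_integral_Ioi c hX tendsto_id
  have hT2 : Tendsto (fun A => ∫ r in c..A, g r) atTop (nhds (∫ r in Ioi c, g r)) :=
    intervalIntegral_tendsto_integral_Ioi c hgint tendsto_id
  have hT3 : Tendsto (fun A => (A - c) * u A) atTop (nhds 0) := by
    have hAu : Tendsto (fun A => A * u A) atTop (nhds 0) := by
      have h1 : Tendsto (fun A : ℝ => ‖((Real.sqrt A : ℝ) : ℂ) * f A‖ ^ 2) atTop (nhds 0) := by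
        have := (hdecay.norm).pow 2
        simpa using this
      refine h1.congr' ?_
      filter_upwards [eventually_ge_atTop (0:ℝ)] with A hA
      rw [norm_mul, mul_pow, Complex.norm_real, Real.norm_eq_abs,
        abs_of_nonneg (Real.sqrt_nonneg A), Real.sq_sqrt hA]
    have hu0 : Tendsto u atTop (nhds 0) := by
      refine squeeze_zero' ?_ ?_ hAu
      · filter_upwards with A; exact sq_nonneg _
      · filter_upwards [eventually_ge_atTop (1:ℝ)] with A hA
        simp only [hu]
        nlinarith [sq_nonneg ‖f A‖]
    have := hAu.sub (hu0.const_mul c)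
    simp only [mul_zero, sub_zero] at this
    refine this.congr ?_
    intro A; ring
  have hT4 : Tendsto (fun A => (∫ r in c..A, u r) + 2 * (∫ r in c..A, g r)) atTop
      (nhds ((∫ r in Ioi c, u r) + 2 * (∫ r in Ioi c, g r))) :=
    hT1.add ((hT2.const_mul 2))
  have hT4' : Tendsto (fun A => (∫ r in c..A, u r) + 2 * (∫ r in c..A, g r)) atTop (nhds 0) := by
    refine hT3.congr' ?_
    filter_upwards [eventually_gt_atTop c] with A hA
    exact (hFTC A hA).symm
  have hXg : (∫ r in Ioi c, u r) + 2 * (∫ r in Ioi c, g r) = 0 :=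
    tendsto_nhds_unique hT4 hT4'
  -- final estimate
  have habs : |∫ r in Ioi c, g r| ≤ ∫ r in Ioi c, |g r| := by
    simpa [Real.norm_eq_abs] using
      norm_integral_le_integral_norm (μ := volume.restrict (Ioi c)) g
  have hmono : ∫ r in Ioi c, |g r| ≤ ∫ r in Ioi c, (u r / 4 + ℓ ^ 2 * G r) := by
    refine setIntegral_mono_on hgint.abs ?_ measurableSet_Ioi ?_
    · have h1 : Integrable u (volume.restrict (Ioi c)) := hX
      have h2 : Integrable G (volume.restrict (Ioi c)) := hfin
      exact ((h1.const_mul (1/4 : ℝ)).add (h2.const_mul (ℓ ^ 2))).congr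
        (by filter_upwards with r; simp only [Pi.add_apply]; ring)
    · intro r hr
      have := hptw r hr
      linarith
  have hsplit : ∫ r in Ioi c, (u r / 4 + ℓ ^ 2 * G r)
      = (∫ r in Ioi c, u r) / 4 + ℓ ^ 2 * (∫ r in Ioi c, G r) := by
    have h14 : Integrable (fun r => u r / 4) (volume.restrict (Ioi c)) := hX.div_const 4
    rw [integral_add h14 (hfin.const_mul (ℓ ^ 2)), integral_const_mul, integral_div]
  set X := ∫ r in Ioi c, u r
  set Y := ∫ r in Ioi c, G r
  have hfinal : X ≤ X / 2 + 2 * ℓ ^ 2 * Y := by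
    have h1 : X = -2 * (∫ r in Ioi c, g r) := by linarith [hXg]
    have h2 : -2 * (∫ r in Ioi c, g r) ≤ 2 * |∫ r in Ioi c, g r| := by
      rcases abs_cases (∫ r in Ioi c, g r) with ⟨h, _⟩ | ⟨h, _⟩ <;> nlinarith [abs_nonneg (∫ r in Ioi c, g r)]
    calc X = -2 * (∫ r in Ioi c, g r) := h1
      _ ≤ 2 * |∫ r in Ioi c, g r| := h2
      _ ≤ 2 * (∫ r in Ioi c, |g r|) := by linarith [habs]
      _ ≤ 2 * ((∫ r in Ioi c, u r) / 4 + ℓ ^ 2 * (∫ r in Ioi c, G r)) := by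
          rw [← hsplit]; linarith [hmono]
      _ = X / 2 + 2 * ℓ ^ 2 * Y := by ring
  -- conclude
  have hXY : X ≤ 4 * ℓ ^ 2 * Y := by linarith
  rw [div_mul_eq_mul_div, one_mul, div_le_iff₀ (by positivity : (0:ℝ) < 4 * ℓ ^ 2)]
  calc X ≤ 4 * ℓ ^ 2 * Y := hXY
    _ = Y * (4 * ℓ ^ 2) := by ring
end

section
/- Let ℓ>0 and a∈ℝ with |a|<ℓ, Ξ := 1−a²/ℓ², ω∈ℝ, m∈ℤ, and Δ_θ(θ) := 1 − (a²/ℓ²)cos²θ. Then for every smooth S:(0,π)→ℂ with ∫₀^π |S(θ)|² sinθ dθ = 1 and for which the left-hand side below is finite, one has ∫₀^π [ Δ_θ(θ)|S'(θ)|² + ( Ξ²m²/(Δ_θ(θ)sin²θ) − (Ξ/Δ_θ(θ))a²ω²cos²θ − 2maω(Ξ/Δ_θ(θ))(a²/ℓ²)cos²θ )|S(θ)|² ] sinθ dθ ≥ Ξ²|m|(|m|+1) − a²ω². -/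
open Real MeasureTheory Set

lemma stmt6_normsq (z : ℂ) : ‖z‖^2 = z.re^2 + z.im^2 := by
  rw [Complex.sq_norm, Complex.normSq_apply]; ring

lemma stmt6_pointQ (Ξ c mm a ω s co D : ℝ) (hs : 0 < s) (hD : D = 1 - c*co^2)
    (hΞ : Ξ = 1 - c) (hc0 : 0 ≤ c) (hc1 : c < 1) (hsc : s^2 + co^2 = 1) :
    Ξ^2*mm^2/s^2 - a^2*ω^2 ≤ Ξ^2*mm^2/(D*s^2) - Ξ/D*a^2*ω^2*co^2 - 2*mm*a*ω*(Ξ/D)*c*co^2 := by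
  have hco2 : 0 ≤ co^2 := sq_nonneg co
  have hco1 : co^2 ≤ 1 := by nlinarith [sq_nonneg s]
  have hDpos : 0 < D := by
    rw [hD]; nlinarith
  rw [← sub_nonneg]
  have key : D*s^2*((Ξ^2*mm^2/(D*s^2) - Ξ/D*a^2*ω^2*co^2 - 2*mm*a*ω*(Ξ/D)*c*co^2) - (Ξ^2*mm^2/s^2 - a^2*ω^2))
      = Ξ^2*mm^2*c*co^2 - 2*mm*a*ω*Ξ*c*co^2*s^2 + a^2*ω^2*s^4 := by
    have hco : co^2 = 1 - s^2 := by linarith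
    have h1ne : 1 - c + c*s^2 ≠ 0 := by nlinarith [sq_nonneg s, mul_nonneg hc0 (sq_nonneg s)]
    rw [hD, hΞ, hco]
    have h2 : 1 - c * (1 - s^2) = 1 - c + c*s^2 := by ring
    rw [h2]
    field_simp
    ring
  have hpoly : 0 ≤ Ξ^2*mm^2*c*co^2 - 2*mm*a*ω*Ξ*c*co^2*s^2 + a^2*ω^2*s^4 := by
    nlinarith [sq_nonneg (Ξ*mm*c*co^2 - a*ω*s^2),
      mul_nonneg (mul_nonneg (mul_nonneg (sq_nonneg (Ξ*mm)) hc0) hco2) hDpos.le,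
      hD]
  have h3 : 0 ≤ D*s^2*((Ξ^2*mm^2/(D*s^2) - Ξ/D*a^2*ω^2*co^2 - 2*mm*a*ω*(Ξ/D)*c*co^2) - (Ξ^2*mm^2/s^2 - a^2*ω^2)) := by
    rw [key]; exact hpoly
  exact nonneg_of_mul_nonneg_right h3 (by positivity)

lemma stmt6_small_zero (S : ℝ → ℂ) (k : ℝ) (hk : 1 ≤ k)
    (hT : IntervalIntegrable (fun θ => Real.sin θ * ‖deriv S θ‖ ^ 2 + k ^ 2 / Real.sin θ * ‖S θ‖ ^ 2) volume 0 π)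
    (ε : ℝ) (hε : 0 < ε) (δ : ℝ) (hδ : 0 < δ) (hδ2 : δ ≤ π/2) :
    ∃ x ∈ Ioo (0:ℝ) δ, ‖S x‖^2 < ε := by
  by_contra hcon
  push_neg at hcon
  have hk0 : (0:ℝ) < k := lt_of_lt_of_le one_pos hk
  have h2 : IntervalIntegrable (fun x => x⁻¹) volume 0 (δ/2) := by
    have hsub : IntervalIntegrable (fun θ => Real.sin θ * ‖deriv S θ‖ ^ 2 + k ^ 2 / Real.sin θ * ‖S θ‖ ^ 2) volume 0 (δ/2) := by
      apply hT.mono_set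
      rw [uIcc_of_le (by linarith), uIcc_of_le pi_pos.le]
      exact Icc_subset_Icc le_rfl (by linarith [pi_pos])
    apply IntervalIntegrable.mono_fun' (hsub.const_mul (ε⁻¹ * (k*k)⁻¹))
    · exact (measurable_inv.aestronglyMeasurable)
    · rw [uIoc_of_le (by linarith : (0:ℝ) ≤ δ/2)]
      filter_upwards [ae_restrict_mem measurableSet_Ioc] with x hx
      have hx0 : 0 < x := hx.1
      have hxδ : x < δ := lt_of_le_of_lt hx.2 (by linarith)
      have hxπ : x < π := lt_of_lt_of_le hxδ (by linarith [pi_pos])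
      have hsin : 0 < Real.sin x := Real.sin_pos_of_pos_of_lt_pi hx0 hxπ
      have hsle : Real.sin x ≤ x := Real.sin_le hx0.le
      have hNx : ε ≤ ‖S x‖^2 := hcon x ⟨hx0, hxδ⟩
      have h3 : x⁻¹ ≤ (Real.sin x)⁻¹ := by
        apply inv_anti₀ hsin hsle
      have h4 : (Real.sin x)⁻¹ = (ε⁻¹ * (k*k)⁻¹) * (k^2 / Real.sin x * ε) := by
        field_simp
      have h5 : (ε⁻¹ * (k*k)⁻¹) * (k^2 / Real.sin x * ε) ≤
          (ε⁻¹ * (k*k)⁻¹) * (Real.sin x * ‖deriv S x‖ ^ 2 + k ^ 2 / Real.sin x * ‖S x‖ ^ 2) := by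
        apply mul_le_mul_of_nonneg_left _ (by positivity)
        have h6 : k^2 / Real.sin x * ε ≤ k^2 / Real.sin x * ‖S x‖^2 := by
          apply mul_le_mul_of_nonneg_left hNx (by positivity)
        nlinarith [mul_nonneg hsin.le (sq_nonneg ‖deriv S x‖)]
      have : ‖x⁻¹‖ = x⁻¹ := by
        rw [Real.norm_eq_abs, abs_of_pos (by positivity)]
      rw [this]
      calc x⁻¹ ≤ (Real.sin x)⁻¹ := h3
        _ = _ := h4
        _ ≤ _ := h5
  rw [intervalIntegrable_inv_iff] at h2
  rcases h2 with h | h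
  · linarith
  · exact h (left_mem_uIcc)

lemma stmt6_small_pi (S : ℝ → ℂ) (k : ℝ) (hk : 1 ≤ k)
    (hT : IntervalIntegrable (fun θ => Real.sin θ * ‖deriv S θ‖ ^ 2 + k ^ 2 / Real.sin θ * ‖S θ‖ ^ 2) volume 0 π)
    (ε : ℝ) (hε : 0 < ε) (δ : ℝ) (hδ : 0 < δ) (hδ2 : δ ≤ π/2) :
    ∃ x ∈ Ioo (π - δ) π, ‖S x‖^2 < ε := by
  by_contra hcon
  push_neg at hcon
  have hk0 : (0:ℝ) < k := lt_of_lt_of_le one_pos hk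
  have h2 : IntervalIntegrable (fun x => (x - π)⁻¹) volume (π - δ/2) π := by
    have hsub : IntervalIntegrable (fun θ => Real.sin θ * ‖deriv S θ‖ ^ 2 + k ^ 2 / Real.sin θ * ‖S θ‖ ^ 2) volume (π - δ/2) π := by
      apply hT.mono_set
      rw [uIcc_of_le (by linarith), uIcc_of_le pi_pos.le]
      exact Icc_subset_Icc (by linarith [pi_pos]) le_rfl
    apply IntervalIntegrable.mono_fun' (hsub.const_mul (ε⁻¹ * (k*k)⁻¹))
    · exact ((measurable_id.sub_const π).inv).aestronglyMeasurable
    · rw [uIoc_of_le (by linarith : π - δ/2 ≤ π)]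
      filter_upwards [ae_restrict_mem measurableSet_Ioc] with x hx
      rcases eq_or_lt_of_le hx.2 with rfl | hxπ
      · simp [Real.sin_pi]
      · have hx0 : 0 < x := lt_of_le_of_lt (by linarith [pi_pos]) hx.1
        have hxδ : π - δ < x := lt_of_le_of_lt (by linarith) hx.1
        have hsin : 0 < Real.sin x := Real.sin_pos_of_pos_of_lt_pi hx0 hxπ
        have hsle : Real.sin x ≤ π - x := by
          rw [← Real.sin_pi_sub]
          exact Real.sin_le (by linarith)
        have hNx : ε ≤ ‖S x‖^2 := hcon x ⟨hxδ, hxπ⟩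
        have h3 : (π - x)⁻¹ ≤ (Real.sin x)⁻¹ := inv_anti₀ hsin hsle
        have h4 : (Real.sin x)⁻¹ = (ε⁻¹ * (k*k)⁻¹) * (k^2 / Real.sin x * ε) := by
          field_simp
        have h5 : (ε⁻¹ * (k*k)⁻¹) * (k^2 / Real.sin x * ε) ≤
            (ε⁻¹ * (k*k)⁻¹) * (Real.sin x * ‖deriv S x‖ ^ 2 + k ^ 2 / Real.sin x * ‖S x‖ ^ 2) := by
          apply mul_le_mul_of_nonneg_left _ (by positivity)
          have h6 : k^2 / Real.sin x * ε ≤ k^2 / Real.sin x * ‖S x‖^2 :=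
            mul_le_mul_of_nonneg_left hNx (by positivity)
          nlinarith [mul_nonneg hsin.le (sq_nonneg ‖deriv S x‖)]
        have hne : ‖(x - π)⁻¹‖ = (π - x)⁻¹ := by
          rw [Real.norm_eq_abs, abs_inv, abs_of_neg (by linarith : x - π < 0)]
          ring_nf
        rw [hne]
        calc (π - x)⁻¹ ≤ (Real.sin x)⁻¹ := h3
          _ = _ := h4
          _ ≤ _ := h5
  rw [intervalIntegrable_sub_inv_iff] at h2
  rcases h2 with h | h
  · linarith
  · exact h (right_mem_uIcc)

set_option maxHeartbeats 2000000 in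
lemma stmt6_spectral (S : ℝ → ℂ) (hS : ContDiffOn ℝ (⊤ : ℕ∞) S (Set.Ioo 0 π)) (k : ℝ) (hk : 1 ≤ k)
    (hT : IntervalIntegrable (fun θ => Real.sin θ * ‖deriv S θ‖ ^ 2 + k ^ 2 / Real.sin θ * ‖S θ‖ ^ 2) volume 0 π)
    (hN : IntervalIntegrable (fun θ => ‖S θ‖ ^ 2 * Real.sin θ) volume 0 π) :
    k * (k + 1) * ∫ θ in (0:ℝ)..π, ‖S θ‖ ^ 2 * Real.sin θ ≤
      ∫ θ in (0:ℝ)..π, (Real.sin θ * ‖deriv S θ‖ ^ 2 + k ^ 2 / Real.sin θ * ‖S θ‖ ^ 2) := by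
  have hk0 : (0:ℝ) < k := lt_of_lt_of_le one_pos hk
  have hπ : (0:ℝ) < π := pi_pos
  -- derivative facts
  have hdS : ∀ θ ∈ Ioo (0:ℝ) π, HasDerivAt S (deriv S θ) θ := by
    intro θ hθ
    exact ((hS.differentiableOn (by simp) θ hθ).differentiableAt (isOpen_Ioo.mem_nhds hθ)).hasDerivAt
  have hS'c : ContinuousOn (deriv S) (Ioo (0:ℝ) π) :=
    hS.continuousOn_deriv_of_isOpen isOpen_Ioo (by simp)
  have hSc : ContinuousOn S (Ioo (0:ℝ) π) := hS.continuousOn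
  have hNd : ∀ θ ∈ Ioo (0:ℝ) π, HasDerivAt (fun t => ‖S t‖^2)
      (2*((S θ).re*(deriv S θ).re + (S θ).im*(deriv S θ).im)) θ := by
    intro θ hθ
    have hre : HasDerivAt (fun t => (S t).re) ((deriv S θ).re) θ :=
      Complex.reCLM.hasFDerivAt.comp_hasDerivAt θ (hdS θ hθ)
    have him : HasDerivAt (fun t => (S t).im) ((deriv S θ).im) θ :=
      Complex.imCLM.hasFDerivAt.comp_hasDerivAt θ (hdS θ hθ)
    have h2 := (hre.pow 2).add (him.pow 2)
    simp only [stmt6_normsq]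
    convert h2 using 1
    · rfl
    · rfl
    · rfl
    ring
  have hGd : ∀ θ ∈ Ioo (0:ℝ) π, HasDerivAt (fun t => k * Real.cos t * ‖S t‖^2)
      (k * (-Real.sin θ) * ‖S θ‖^2 +
        k * Real.cos θ * (2*((S θ).re*(deriv S θ).re + (S θ).im*(deriv S θ).im))) θ := by
    intro θ hθ
    exact ((Real.hasDerivAt_cos θ).const_mul k).mul (hNd θ hθ)
  have hGdc : ContinuousOn (fun θ => k * (-Real.sin θ) * ‖S θ‖^2 +
      k * Real.cos θ * (2*((S θ).re*(deriv S θ).re + (S θ).im*(deriv S θ).im))) (Ioo (0:ℝ) π) := by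
    apply ContinuousOn.add
    · exact (continuousOn_const.mul (Real.continuous_sin.continuousOn.neg)).mul ((hSc.norm).pow 2)
    · apply (continuousOn_const.mul Real.continuous_cos.continuousOn).mul
      apply continuousOn_const.mul
      exact ((Complex.continuous_re.comp_continuousOn hSc).mul
          (Complex.continuous_re.comp_continuousOn hS'c)).add
        ((Complex.continuous_im.comp_continuousOn hSc).mul
          (Complex.continuous_im.comp_continuousOn hS'c))
  -- P integrable
  have hP : IntervalIntegrable (fun θ => (Real.sin θ * ‖deriv S θ‖ ^ 2 + k ^ 2 / Real.sin θ * ‖S θ‖ ^ 2)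
      - k * (k+1) * (‖S θ‖ ^ 2 * Real.sin θ)) volume 0 π := hT.sub (hN.const_mul _)
  -- mid interval estimate
  have hmid : ∀ a ∈ Ioo (0:ℝ) π, ∀ b ∈ Ioo (0:ℝ) π, a ≤ b →
      k * Real.cos b * ‖S b‖^2 - k * Real.cos a * ‖S a‖^2 ≤
      ∫ θ in a..b, ((Real.sin θ * ‖deriv S θ‖ ^ 2 + k ^ 2 / Real.sin θ * ‖S θ‖ ^ 2)
        - k * (k+1) * (‖S θ‖ ^ 2 * Real.sin θ)) := by
    intro a ha b hb hab
    have hsub : uIcc a b ⊆ Ioo (0:ℝ) π := by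
      rw [uIcc_of_le hab]
      exact fun x hx => ⟨lt_of_lt_of_le ha.1 hx.1, lt_of_le_of_lt hx.2 hb.2⟩
    have hGint : IntervalIntegrable (fun θ => k * (-Real.sin θ) * ‖S θ‖^2 +
        k * Real.cos θ * (2*((S θ).re*(deriv S θ).re + (S θ).im*(deriv S θ).im))) volume a b :=
      (hGdc.mono hsub).intervalIntegrable
    have hftc : ∫ θ in a..b, (k * (-Real.sin θ) * ‖S θ‖^2 +
        k * Real.cos θ * (2*((S θ).re*(deriv S θ).re + (S θ).im*(deriv S θ).im)))
        = k * Real.cos b * ‖S b‖^2 - k * Real.cos a * ‖S a‖^2 :=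
      intervalIntegral.integral_eq_sub_of_hasDerivAt (fun x hx => hGd x (hsub hx)) hGint
    have hPab : IntervalIntegrable (fun θ => (Real.sin θ * ‖deriv S θ‖ ^ 2 + k ^ 2 / Real.sin θ * ‖S θ‖ ^ 2)
        - k * (k+1) * (‖S θ‖ ^ 2 * Real.sin θ)) volume a b := by
      apply hP.mono_set
      rw [uIcc_of_le hπ.le]
      exact hsub.trans Ioo_subset_Icc_self
    have hdiff : 0 ≤ ∫ θ in a..b,
        (((Real.sin θ * ‖deriv S θ‖ ^ 2 + k ^ 2 / Real.sin θ * ‖S θ‖ ^ 2)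
          - k * (k+1) * (‖S θ‖ ^ 2 * Real.sin θ))
         - (k * (-Real.sin θ) * ‖S θ‖^2 +
            k * Real.cos θ * (2*((S θ).re*(deriv S θ).re + (S θ).im*(deriv S θ).im)))) := by
      apply intervalIntegral.integral_nonneg hab
      intro u hu
      have huI : u ∈ Ioo (0:ℝ) π := hsub (by rw [uIcc_of_le hab]; exact hu)
      have hs : 0 < Real.sin u := Real.sin_pos_of_pos_of_lt_pi huI.1 huI.2
      have hsc : Real.sin u ^ 2 + Real.cos u ^ 2 = 1 := Real.sin_sq_add_cos_sq u
      simp only [stmt6_normsq]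
      set s := Real.sin u
      set c := Real.cos u
      set r := (S u).re
      set i := (S u).im
      set r' := (deriv S u).re
      set i' := (deriv S u).im
      have key : s * ((s * (r'^2 + i'^2) + k^2 / s * (r^2 + i^2) - k * (k+1) * ((r^2+i^2) * s))
          - (k * (-s) * (r^2+i^2) + k * c * (2*(r*r' + i*i'))))
          = (s*r' - k*c*r)^2 + (s*i' - k*c*i)^2 := by
        field_simp
        linear_combination (-(k^2*(r^2 + i^2))) * hsc
      nlinarith [key, sq_nonneg (s*r' - k*c*r), sq_nonneg (s*i' - k*c*i), hs]
    rw [intervalIntegral.integral_sub hPab hGint, hftc] at hdiff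
    linarith
  -- primitive of the norm
  have hNicc : IntegrableOn (fun θ => ‖S θ‖ ^ 2 * Real.sin θ) (uIcc (0:ℝ) π) volume := by
    rw [uIcc_of_le hπ.le, integrableOn_Icc_iff_integrableOn_Ioc]
    exact (intervalIntegrable_iff_integrableOn_Ioc_of_le hπ.le).mp hN
  have hH1 : ContinuousOn (fun x => ∫ t in (0:ℝ)..x, ‖S t‖ ^ 2 * Real.sin t) (uIcc (0:ℝ) π) :=
    intervalIntegral.continuousOn_primitive_interval hNicc
  -- nonnegativity of partial norms
  have hH1nn : ∀ x ∈ Icc (0:ℝ) π, 0 ≤ ∫ t in (0:ℝ)..x, ‖S t‖ ^ 2 * Real.sin t := by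
    intro x hx
    apply intervalIntegral.integral_nonneg hx.1
    intro u hu
    have : 0 ≤ Real.sin u := Real.sin_nonneg_of_nonneg_of_le_pi hu.1 (le_trans hu.2 hx.2)
    positivity
  have hH1pi : ∀ x ∈ Icc (0:ℝ) π, 0 ≤ ∫ t in x..π, ‖S t‖ ^ 2 * Real.sin t := by
    intro x hx
    apply intervalIntegral.integral_nonneg hx.2
    intro u hu
    have : 0 ≤ Real.sin u := Real.sin_nonneg_of_nonneg_of_le_pi (le_trans hx.1 hu.1) hu.2
    positivity
  -- key nonnegativity
  have key : 0 ≤ ∫ θ in (0:ℝ)..π, ((Real.sin θ * ‖deriv S θ‖ ^ 2 + k ^ 2 / Real.sin θ * ‖S θ‖ ^ 2)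
      - k * (k+1) * (‖S θ‖ ^ 2 * Real.sin θ)) := by
    refine le_of_forall_pos_le_add ?_
    intro ε hε
    have hCpos : (0:ℝ) < 2*k*(k+1) + 2*k + 1 := by nlinarith [hk0]
    set ε' : ℝ := ε / (2*k*(k+1) + 2*k + 1) with hε'def
    have hε' : 0 < ε' := div_pos hε hCpos
    -- continuity of H1 at 0 and π
    have h0c := (hH1 0 (by rw [uIcc_of_le hπ.le]; exact ⟨le_rfl, hπ.le⟩))
    have hπc := (hH1 π (by rw [uIcc_of_le hπ.le]; exact ⟨hπ.le, le_rfl⟩))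
    rw [ContinuousWithinAt] at h0c hπc
    rw [Metric.tendsto_nhdsWithin_nhds] at h0c hπc
    obtain ⟨δ₁, hδ₁, hδ₁p⟩ := h0c ε' hε'
    obtain ⟨δ₂, hδ₂, hδ₂p⟩ := hπc ε' hε'
    -- choose a
    obtain ⟨aa, haa, haN⟩ := stmt6_small_zero S k hk hT ε' hε' (min δ₁ (π/2))
      (lt_min hδ₁ (by positivity)) (min_le_right _ _)
    obtain ⟨bb, hbb, hbN⟩ := stmt6_small_pi S k hk hT ε' hε' (min δ₂ (π/2))
      (lt_min hδ₂ (by positivity)) (min_le_right _ _)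
    have haIoo : aa ∈ Ioo (0:ℝ) π := ⟨haa.1, lt_of_lt_of_le (lt_of_lt_of_le haa.2 (min_le_right _ _)) (by linarith)⟩
    have hbIoo : bb ∈ Ioo (0:ℝ) π := ⟨lt_trans (by nlinarith [min_le_right δ₂ (π/2)] : (0:ℝ) < π - min δ₂ (π/2)) hbb.1, hbb.2⟩
    have hab : aa ≤ bb := by
      have h1 : aa < π/2 := lt_of_lt_of_le haa.2 (min_le_right _ _)
      have h2 : π/2 < bb := lt_of_le_of_lt (by linarith [min_le_right δ₂ (π/2)]) hbb.1
      linarith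
    -- H1 bounds
    have hH1a : |∫ t in (0:ℝ)..aa, ‖S t‖ ^ 2 * Real.sin t| < ε' := by
      have := hδ₁p (by rw [uIcc_of_le hπ.le]; exact ⟨haIoo.1.le, haIoo.2.le⟩)
        (by rw [Real.dist_eq, sub_zero, abs_of_pos haa.1]; exact lt_of_lt_of_le haa.2 (min_le_left _ _))
      rwa [Real.dist_eq, intervalIntegral.integral_same, sub_zero] at this
    have hH1b : |(∫ t in (0:ℝ)..bb, ‖S t‖ ^ 2 * Real.sin t) - ∫ t in (0:ℝ)..π, ‖S t‖ ^ 2 * Real.sin t| < ε' := by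
      have := hδ₂p (by rw [uIcc_of_le hπ.le]; exact ⟨hbIoo.1.le, hbIoo.2.le⟩)
        (by rw [Real.dist_eq, abs_of_neg (by linarith [hbb.2] : bb - π < 0)];
            linarith [hbb.1, min_le_left δ₂ (π/2)])
      rwa [Real.dist_eq] at this
    -- integrability on pieces
    have hsub1 : uIcc (0:ℝ) aa ⊆ uIcc (0:ℝ) π := by
      rw [uIcc_of_le haIoo.1.le, uIcc_of_le hπ.le]
      exact Icc_subset_Icc le_rfl haIoo.2.le
    have hsub2 : uIcc aa bb ⊆ uIcc (0:ℝ) π := by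
      rw [uIcc_of_le hab, uIcc_of_le hπ.le]
      exact Icc_subset_Icc haIoo.1.le hbIoo.2.le
    have hsub3 : uIcc bb π ⊆ uIcc (0:ℝ) π := by
      rw [uIcc_of_le hbIoo.2.le, uIcc_of_le hπ.le]
      exact Icc_subset_Icc hbIoo.1.le le_rfl
    have hP1 := hP.mono_set hsub1
    have hP2 := hP.mono_set hsub2
    have hP3 := hP.mono_set hsub3
    have hsub4 : uIcc aa π ⊆ uIcc (0:ℝ) π := by
      rw [uIcc_of_le haIoo.2.le, uIcc_of_le hπ.le]
      exact Icc_subset_Icc haIoo.1.le le_rfl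
    have hP4 := hP.mono_set hsub4
    have e1 := intervalIntegral.integral_add_adjacent_intervals hP2 hP3
    have e2 := intervalIntegral.integral_add_adjacent_intervals hP1 hP4
    -- piece bounds
    -- piece 1
    have hTa : IntervalIntegrable (fun θ => Real.sin θ * ‖deriv S θ‖ ^ 2 + k ^ 2 / Real.sin θ * ‖S θ‖ ^ 2) volume 0 aa :=
      hT.mono_set hsub1
    have hNa : IntervalIntegrable (fun θ => ‖S θ‖ ^ 2 * Real.sin θ) volume 0 aa :=
      hN.mono_set hsub1
    have hTann : 0 ≤ ∫ θ in (0:ℝ)..aa, (Real.sin θ * ‖deriv S θ‖ ^ 2 + k ^ 2 / Real.sin θ * ‖S θ‖ ^ 2) := by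
      apply intervalIntegral.integral_nonneg haIoo.1.le
      intro u hu
      have hsu : 0 ≤ Real.sin u := Real.sin_nonneg_of_nonneg_of_le_pi hu.1 (le_trans hu.2 haIoo.2.le)
      positivity
    have hpiece1 : -(k*(k+1)*ε') ≤ ∫ θ in (0:ℝ)..aa,
        ((Real.sin θ * ‖deriv S θ‖ ^ 2 + k ^ 2 / Real.sin θ * ‖S θ‖ ^ 2)
          - k * (k+1) * (‖S θ‖ ^ 2 * Real.sin θ)) := by
      rw [intervalIntegral.integral_sub hTa (hNa.const_mul _), intervalIntegral.integral_const_mul]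
      have h1 : (∫ t in (0:ℝ)..aa, ‖S t‖ ^ 2 * Real.sin t) < ε' :=
        lt_of_le_of_lt (le_abs_self _) hH1a
      have h2 : 0 ≤ (∫ t in (0:ℝ)..aa, ‖S t‖ ^ 2 * Real.sin t) := hH1nn aa ⟨haIoo.1.le, haIoo.2.le⟩
      have hkk : (0:ℝ) ≤ k*(k+1) := by nlinarith [hk0]
      nlinarith [mul_le_mul_of_nonneg_left h1.le hkk]
    -- piece 3
    have hTb : IntervalIntegrable (fun θ => Real.sin θ * ‖deriv S θ‖ ^ 2 + k ^ 2 / Real.sin θ * ‖S θ‖ ^ 2) volume bb π :=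
      hT.mono_set hsub3
    have hNb : IntervalIntegrable (fun θ => ‖S θ‖ ^ 2 * Real.sin θ) volume bb π :=
      hN.mono_set hsub3
    have hNb0 : IntervalIntegrable (fun θ => ‖S θ‖ ^ 2 * Real.sin θ) volume 0 bb := by
      apply hN.mono_set
      rw [uIcc_of_le hbIoo.1.le, uIcc_of_le hπ.le]
      exact Icc_subset_Icc le_rfl hbIoo.2.le
    have hNsplit := intervalIntegral.integral_add_adjacent_intervals hNb0 hNb
    have hTbnn : 0 ≤ ∫ θ in bb..π, (Real.sin θ * ‖deriv S θ‖ ^ 2 + k ^ 2 / Real.sin θ * ‖S θ‖ ^ 2) := by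
      apply intervalIntegral.integral_nonneg hbIoo.2.le
      intro u hu
      have hsu : 0 ≤ Real.sin u := Real.sin_nonneg_of_nonneg_of_le_pi (le_trans hbIoo.1.le hu.1) hu.2
      positivity
    have hpiece3 : -(k*(k+1)*ε') ≤ ∫ θ in bb..π,
        ((Real.sin θ * ‖deriv S θ‖ ^ 2 + k ^ 2 / Real.sin θ * ‖S θ‖ ^ 2)
          - k * (k+1) * (‖S θ‖ ^ 2 * Real.sin θ)) := by
      rw [intervalIntegral.integral_sub hTb (hNb.const_mul _), intervalIntegral.integral_const_mul]
      have h1 : (∫ t in bb..π, ‖S t‖ ^ 2 * Real.sin t) < ε' := by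
        have := abs_lt.mp hH1b
        linarith [this.1, this.2, hNsplit]
      have h2 : 0 ≤ (∫ t in bb..π, ‖S t‖ ^ 2 * Real.sin t) := hH1pi bb ⟨hbIoo.1.le, hbIoo.2.le⟩
      have hkk : (0:ℝ) ≤ k*(k+1) := by nlinarith [hk0]
      nlinarith [mul_le_mul_of_nonneg_left h1.le hkk]
    -- piece 2
    have hpiece2 : -(2*k*ε') ≤ ∫ θ in aa..bb,
        ((Real.sin θ * ‖deriv S θ‖ ^ 2 + k ^ 2 / Real.sin θ * ‖S θ‖ ^ 2)
          - k * (k+1) * (‖S θ‖ ^ 2 * Real.sin θ)) := by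
      have h1 := hmid aa haIoo bb hbIoo hab
      have hca := Real.neg_one_le_cos aa
      have hca' := Real.cos_le_one aa
      have hcb := Real.neg_one_le_cos bb
      have hcb' := Real.cos_le_one bb
      have hNa' : (0:ℝ) ≤ ‖S aa‖^2 := sq_nonneg _
      have hNb' : (0:ℝ) ≤ ‖S bb‖^2 := sq_nonneg _
      nlinarith [mul_nonneg (mul_nonneg hk0.le (by linarith : (0:ℝ) ≤ Real.cos bb + 1)) hNb',
        mul_nonneg (mul_nonneg hk0.le (by linarith : (0:ℝ) ≤ 1 - Real.cos aa)) hNa',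
        mul_le_mul_of_nonneg_left haN.le hk0.le, mul_le_mul_of_nonneg_left hbN.le hk0.le]
    have hCε : k*(k+1)*ε' + 2*k*ε' + k*(k+1)*ε' ≤ ε := by
      have h2 : k*(k+1)*ε' + 2*k*ε' + k*(k+1)*ε' = ε - ε' := by
        rw [hε'def]; field_simp; ring
      linarith
    linarith [hpiece1, hpiece2, hpiece3, e1, e2]
  rw [intervalIntegral.integral_sub hT (hN.const_mul _), intervalIntegral.integral_const_mul] at key
  linarith


set_option maxHeartbeats 2000000 in
theorem stmt_6 (ℓ a : ℝ) (hℓ : 0 < ℓ) (ha : |a| < ℓ) (ω : ℝ) (m : ℤ)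
    (Ξ : ℝ) (hΞ : Ξ = 1 - a ^ 2 / ℓ ^ 2)
    (Δθ : ℝ → ℝ) (hΔθ : ∀ θ, Δθ θ = 1 - a ^ 2 / ℓ ^ 2 * Real.cos θ ^ 2)
    (S : ℝ → ℂ) (hS : ContDiffOn ℝ (⊤ : ℕ∞) S (Set.Ioo 0 π))
    (hnorm : (∫ θ in (0:ℝ)..π, ‖S θ‖ ^ 2 * Real.sin θ) = 1)
    (hint : IntervalIntegrable (fun θ =>
        (Δθ θ * ‖deriv S θ‖ ^ 2 +
          (Ξ ^ 2 * (m : ℝ) ^ 2 / (Δθ θ * Real.sin θ ^ 2)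
            - Ξ / Δθ θ * a ^ 2 * ω ^ 2 * Real.cos θ ^ 2
            - 2 * (m : ℝ) * a * ω * (Ξ / Δθ θ) * (a ^ 2 / ℓ ^ 2) * Real.cos θ ^ 2)
            * ‖S θ‖ ^ 2) * Real.sin θ) volume 0 π) :
    Ξ ^ 2 * |(m : ℝ)| * (|(m : ℝ)| + 1) - a ^ 2 * ω ^ 2 ≤
      ∫ θ in (0:ℝ)..π,
        (Δθ θ * ‖deriv S θ‖ ^ 2 +
          (Ξ ^ 2 * (m : ℝ) ^ 2 / (Δθ θ * Real.sin θ ^ 2)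
            - Ξ / Δθ θ * a ^ 2 * ω ^ 2 * Real.cos θ ^ 2
            - 2 * (m : ℝ) * a * ω * (Ξ / Δθ θ) * (a ^ 2 / ℓ ^ 2) * Real.cos θ ^ 2)
            * ‖S θ‖ ^ 2) * Real.sin θ := by
  have hπ : (0:ℝ) < π := pi_pos
  have hℓ2 : (0:ℝ) < ℓ^2 := by positivity
  have ha2 : a^2 < ℓ^2 := by nlinarith [sq_abs a, abs_nonneg a]
  set c : ℝ := a^2/ℓ^2 with hc
  have hc0 : (0:ℝ) ≤ c := by positivity
  have hc1 : c < 1 := (div_lt_one hℓ2).mpr ha2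
  have hΞpos : 0 < Ξ := by rw [hΞ]; linarith
  have hΞ1 : Ξ ≤ 1 := by rw [hΞ]; linarith
  set k : ℝ := |(m:ℝ)| with hk
  have hk0 : 0 ≤ k := abs_nonneg _
  have hm2 : (m:ℝ)^2 = k^2 := (sq_abs _).symm
  have hNint : IntervalIntegrable (fun θ => ‖S θ‖ ^ 2 * Real.sin θ) volume 0 π := by
    by_contra hcon
    rw [intervalIntegral.integral_undef hcon] at hnorm
    exact one_ne_zero hnorm.symm
  -- pointwise bound
  have hpt : ∀ θ ∈ Set.Ioo (0:ℝ) π,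
      Ξ^2 * (Real.sin θ * ‖deriv S θ‖ ^ 2 + k ^ 2 / Real.sin θ * ‖S θ‖ ^ 2)
        - a^2*ω^2 * (‖S θ‖ ^ 2 * Real.sin θ)
      ≤ (Δθ θ * ‖deriv S θ‖ ^ 2 +
          (Ξ ^ 2 * (m : ℝ) ^ 2 / (Δθ θ * Real.sin θ ^ 2)
            - Ξ / Δθ θ * a ^ 2 * ω ^ 2 * Real.cos θ ^ 2
            - 2 * (m : ℝ) * a * ω * (Ξ / Δθ θ) * c * Real.cos θ ^ 2)
            * ‖S θ‖ ^ 2) * Real.sin θ := by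
    intro θ hθ
    have hs : 0 < Real.sin θ := Real.sin_pos_of_pos_of_lt_pi hθ.1 hθ.2
    have hsc : Real.sin θ^2 + Real.cos θ^2 = 1 := Real.sin_sq_add_cos_sq θ
    have hDθ : Δθ θ = 1 - c * Real.cos θ^2 := hΔθ θ
    have hco1 : Real.cos θ^2 ≤ 1 := by nlinarith [sq_nonneg (Real.sin θ)]
    have hco0 : 0 ≤ Real.cos θ^2 := sq_nonneg _
    have hDpos : 0 < Δθ θ := by rw [hDθ]; nlinarith [mul_le_mul_of_nonneg_left hco1 hc0]
    have hDΞ : Ξ ≤ Δθ θ := by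
      rw [hDθ, hΞ]; nlinarith [mul_le_mul_of_nonneg_left hco1 hc0]
    have hΞ2D : Ξ^2 ≤ Δθ θ := by nlinarith
    have hW : (0:ℝ) ≤ ‖deriv S θ‖^2 := sq_nonneg _
    have hNn : (0:ℝ) ≤ ‖S θ‖^2 := sq_nonneg _
    have hpart1 : Ξ^2 * (Real.sin θ * ‖deriv S θ‖^2) ≤ Δθ θ * ‖deriv S θ‖^2 * Real.sin θ := by
      nlinarith [mul_nonneg hW hs.le]
    have hQ := stmt6_pointQ Ξ c ((m:ℝ)) a ω (Real.sin θ) (Real.cos θ) (Δθ θ) hs hDθ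
      hΞ hc0 hc1 hsc
    have h5 : (Ξ^2*(m:ℝ)^2/Real.sin θ^2 - a^2*ω^2) * (‖S θ‖^2 * Real.sin θ) ≤
        (Ξ ^ 2 * (m : ℝ) ^ 2 / (Δθ θ * Real.sin θ ^ 2)
            - Ξ / Δθ θ * a ^ 2 * ω ^ 2 * Real.cos θ ^ 2
            - 2 * (m : ℝ) * a * ω * (Ξ / Δθ θ) * c * Real.cos θ ^ 2) * (‖S θ‖^2 * Real.sin θ) :=
      mul_le_mul_of_nonneg_right hQ (by positivity)
    have e3 : Ξ^2 * (k^2/Real.sin θ*‖S θ‖^2) = (Ξ^2*(m:ℝ)^2/Real.sin θ^2) * (‖S θ‖^2 * Real.sin θ) := by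
      rw [hm2]; field_simp
    nlinarith [hpart1, h5, e3]
  -- integrability of T
  have hS'c : ContinuousOn (deriv S) (Set.Ioo (0:ℝ) π) :=
    hS.continuousOn_deriv_of_isOpen isOpen_Ioo (by simp)
  have hSc : ContinuousOn S (Set.Ioo (0:ℝ) π) := hS.continuousOn
  have hTcont : ContinuousOn (fun θ => Real.sin θ * ‖deriv S θ‖ ^ 2 + k ^ 2 / Real.sin θ * ‖S θ‖ ^ 2)
      (Set.Ioo (0:ℝ) π) := by
    apply ContinuousOn.add
    · exact Real.continuous_sin.continuousOn.mul ((hS'c.norm).pow 2)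
    · exact (continuousOn_const.div Real.continuous_sin.continuousOn
        (fun x hx => (Real.sin_pos_of_pos_of_lt_pi hx.1 hx.2).ne')).mul ((hSc.norm).pow 2)
  have hrestr : (volume : Measure ℝ).restrict (Set.Ioo (0:ℝ) π) = volume.restrict (Set.Ioc 0 π) :=
    Measure.restrict_congr_set Ioo_ae_eq_Ioc
  have haeIoo : ∀ᵐ θ ∂(volume.restrict (Set.Ioc (0:ℝ) π)), θ ∈ Set.Ioo (0:ℝ) π := by
    rw [← hrestr]
    filter_upwards [ae_restrict_mem measurableSet_Ioo] with θ hθ using hθ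
  have hTint : IntervalIntegrable (fun θ => Real.sin θ * ‖deriv S θ‖ ^ 2 + k ^ 2 / Real.sin θ * ‖S θ‖ ^ 2)
      volume 0 π := by
    rw [intervalIntegrable_iff_integrableOn_Ioc_of_le hπ.le]
    have hIint : IntegrableOn (fun θ =>
        (Δθ θ * ‖deriv S θ‖ ^ 2 +
          (Ξ ^ 2 * (m : ℝ) ^ 2 / (Δθ θ * Real.sin θ ^ 2)
            - Ξ / Δθ θ * a ^ 2 * ω ^ 2 * Real.cos θ ^ 2
            - 2 * (m : ℝ) * a * ω * (Ξ / Δθ θ) * c * Real.cos θ ^ 2)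
            * ‖S θ‖ ^ 2) * Real.sin θ) (Set.Ioc 0 π) volume :=
      (intervalIntegrable_iff_integrableOn_Ioc_of_le hπ.le).mp hint
    have hNIoc : IntegrableOn (fun θ => ‖S θ‖ ^ 2 * Real.sin θ) (Set.Ioc 0 π) volume :=
      (intervalIntegrable_iff_integrableOn_Ioc_of_le hπ.le).mp hNint
    apply Integrable.mono' (((hIint.add (hNIoc.const_mul (a^2*ω^2))).const_mul ((Ξ^2)⁻¹)))
    · rw [← hrestr]
      exact hTcont.aestronglyMeasurable measurableSet_Ioo
    · filter_upwards [haeIoo] with θ hθ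
      have hs : 0 < Real.sin θ := Real.sin_pos_of_pos_of_lt_pi hθ.1 hθ.2
      have hTnn : 0 ≤ Real.sin θ * ‖deriv S θ‖ ^ 2 + k ^ 2 / Real.sin θ * ‖S θ‖ ^ 2 := by positivity
      rw [Real.norm_eq_abs, abs_of_nonneg hTnn]
      have h6 := hpt θ hθ
      have h7 : 0 ≤ (‖S θ‖ ^ 2 * Real.sin θ) := by positivity
      have h8 : 0 < Ξ^2 := by positivity
      simp only [Pi.add_apply]
      rw [le_inv_mul_iff₀ h8]
      linarith [h6]
  -- monotone comparison
  have hlhs : IntervalIntegrable (fun θ =>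
      Ξ^2 * (Real.sin θ * ‖deriv S θ‖ ^ 2 + k ^ 2 / Real.sin θ * ‖S θ‖ ^ 2)
        - a^2*ω^2 * (‖S θ‖ ^ 2 * Real.sin θ)) volume 0 π :=
    (hTint.const_mul _).sub (hNint.const_mul _)
  have haeIcc : ∀ᵐ θ ∂(volume.restrict (Set.Icc (0:ℝ) π)), θ ≠ 0 ∧ θ ≠ π := by
    have h0 : (volume : Measure ℝ) ({0, π} : Set ℝ) = 0 :=
      ((Set.finite_singleton π).insert 0).measure_zero volume
    have h1 : ∀ᵐ (θ:ℝ), θ ≠ 0 ∧ θ ≠ π := by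
      rw [ae_iff]
      convert h0 using 2
      ext x
      simp [not_and_or, or_comm]
      tauto
    exact h1.filter_mono (ae_mono Measure.restrict_le_self)
  have hmono : (∫ θ in (0:ℝ)..π,
      (Ξ^2 * (Real.sin θ * ‖deriv S θ‖ ^ 2 + k ^ 2 / Real.sin θ * ‖S θ‖ ^ 2)
        - a^2*ω^2 * (‖S θ‖ ^ 2 * Real.sin θ)))
      ≤ ∫ θ in (0:ℝ)..π,
        (Δθ θ * ‖deriv S θ‖ ^ 2 +
          (Ξ ^ 2 * (m : ℝ) ^ 2 / (Δθ θ * Real.sin θ ^ 2)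
            - Ξ / Δθ θ * a ^ 2 * ω ^ 2 * Real.cos θ ^ 2
            - 2 * (m : ℝ) * a * ω * (Ξ / Δθ θ) * c * Real.cos θ ^ 2)
            * ‖S θ‖ ^ 2) * Real.sin θ := by
    apply intervalIntegral.integral_mono_ae_restrict hπ.le hlhs hint
    filter_upwards [haeIcc, ae_restrict_mem measurableSet_Icc] with θ hθ1 hθ2
    exact hpt θ ⟨lt_of_le_of_ne hθ2.1 (Ne.symm hθ1.1), lt_of_le_of_ne hθ2.2 hθ1.2⟩
  rw [intervalIntegral.integral_sub (hTint.const_mul _) (hNint.const_mul _),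
    intervalIntegral.integral_const_mul, intervalIntegral.integral_const_mul, hnorm] at hmono
  -- spectral bound
  have hspec : k*(k+1) ≤ ∫ θ in (0:ℝ)..π,
      (Real.sin θ * ‖deriv S θ‖ ^ 2 + k ^ 2 / Real.sin θ * ‖S θ‖ ^ 2) := by
    rcases eq_or_ne m 0 with rfl | hm
    · have hk' : k = 0 := by rw [hk]; simp
      rw [hk']
      have : (0:ℝ) ≤ ∫ θ in (0:ℝ)..π,
          (Real.sin θ * ‖deriv S θ‖ ^ 2 + (0:ℝ) ^ 2 / Real.sin θ * ‖S θ‖ ^ 2) := by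
        apply intervalIntegral.integral_nonneg hπ.le
        intro u hu
        have : 0 ≤ Real.sin u := Real.sin_nonneg_of_nonneg_of_le_pi hu.1 hu.2
        positivity
      linarith
    · have hk1 : 1 ≤ k := by
        rw [hk]
        have : (1:ℤ) ≤ |m| := Int.one_le_abs hm
        calc (1:ℝ) ≤ ((|m| : ℤ) : ℝ) := by exact_mod_cast this
          _ = |(m:ℝ)| := by push_cast; ring
      have := stmt6_spectral S hS k hk1 hTint hNint
      rw [hnorm] at this
      linarith
  nlinarith [hmono, hspec, mul_le_mul_of_nonneg_left hspec (sq_nonneg Ξ)]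
end

section
/- Assume additionally a ≥ 0 and r_+² ≥ aℓ (the Hawking-Reall bound), and let α < 9/4. Then there exists m₀∈ℕ such that for every m∈ℤ with |m| ≥ m₀, every λ∈ℝ with λ ≥ Ξ²m², and every smooth complex-valued f compactly supported in (r_+,∞), the functional with radial potential V built from (m, ω_+, α, λ) is nonnegative: ∫_{r_+}^∞ ( (Δ_-(r)/(r²+a²))|f'(r)|² + (V(r)−ω_+²)·((r²+a²)/Δ_-(r))|f(r)|² ) dr ≥ 0. -/
open Set MeasureTheory

set_option maxHeartbeats 4000000

noncomputable def KerrC3 (rp a l r : ℝ) : ℝ :=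
  rp*r^3 + rp^2*r^2 + (rp^3 + rp*a^2 + rp*l^2)*r - a^2*l^2

noncomputable def KerrF1 (rp a l r : ℝ) : ℝ :=
  rp*r*((rp^4 - a^2*l^2)*(r^2 + rp*r) + rp^6 + rp^4*a^2 + rp^4*l^2 + a^2*l^2*rp^2)

noncomputable def KerrN1 (rp a l r : ℝ) : ℝ :=
  5*rp*r^4 + 3*rp*r^2*(l^2+a^2) - 2*r*(rp^2+a^2)*(l^2+rp^2) + a^2*l^2*rp

noncomputable def KerrP1 (rp a l ab r : ℝ) : ℝ :=
  (rp^2+a^2)^2*(4*KerrN1 rp a l r*(r^2+a^2)*KerrC3 rp a l r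
    - 12*r^2*(r-rp)*(KerrC3 rp a l r)^2
    + (2-4*ab)*rp*KerrC3 rp a l r*(r^2+a^2)^3
    - rp^2*(r-rp)*(r^2+a^2)^4)

noncomputable def KerrEE (rp a l ab x : ℝ) : ℝ :=
  (rp^2+a^2)^2*(4*(5*rp + 3*rp*(l^2+a^2)*x^2 - 2*(rp^2+a^2)*(l^2+rp^2)*x^3 + a^2*l^2*rp*x^4)
      *(1+a^2*x^2)*(rp + rp^2*x + (rp^3+rp*a^2+rp*l^2)*x^2 - a^2*l^2*x^3)
    - 12*(1-rp*x)*(rp + rp^2*x + (rp^3+rp*a^2+rp*l^2)*x^2 - a^2*l^2*x^3)^2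
    + (2-4*ab)*rp*(rp + rp^2*x + (rp^3+rp*a^2+rp*l^2)*x^2 - a^2*l^2*x^3)*(1+a^2*x^2)^3
    - rp^2*(1-rp*x)*(1+a^2*x^2)^4)

lemma KerrP1_eq (rp a l ab r : ℝ) (hr : 0 < r) :
    KerrP1 rp a l ab r = r^9 * KerrEE rp a l ab (1/r) := by
  unfold KerrP1 KerrEE KerrC3 KerrN1
  field_simp

lemma KerrEE_zero (rp a l ab : ℝ) : KerrEE rp a l ab 0 = (rp^2+a^2)^2*rp^2*(9-4*ab) := by
  unfold KerrEE; ring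

lemma Kerr_sq_helper (w h x y x' y' : ℝ) (hw : 0 < w) :
    0 ≤ w * (x'^2 + y'^2) + 2*h*(x*x' + y*y') + h^2/w*(x^2+y^2) := by
  have key : w * (x'^2 + y'^2) + 2*h*(x*x' + y*y') + h^2/w*(x^2+y^2)
      = ((w*x'+h*x)^2 + (w*y'+h*y)^2)/w := by
    field_simp; ring
  rw [key]; positivity

lemma KerrC3_pos (rp a l r : ℝ) (hrp : 0 < rp) (hl : 0 < l) (ha2 : a^2 ≤ rp^2) (hr : rp ≤ r) :
    0 < KerrC3 rp a l r := by
  unfold KerrC3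
  have h0 : 0 < r := lt_of_lt_of_le hrp hr
  have h1 : a^2*l^2 ≤ rp^2*l^2 := mul_le_mul_of_nonneg_right ha2 (sq_nonneg l)
  have h2 : rp^2*l^2 ≤ rp*l^2*r := by nlinarith [mul_le_mul_of_nonneg_left hr hrp.le, sq_nonneg l]
  have h3 : 0 < rp*r^3 := by positivity
  have h4 : 0 ≤ rp^2*r^2 := by positivity
  have h5 : 0 ≤ (rp^3 + rp*a^2)*r := by positivity
  nlinarith [h1, h2, h3, h4, h5]

lemma KerrF1_pos (rp a l r : ℝ) (hrp : 0 < rp) (hl : 0 < l) (hHR : a^2*l^2 ≤ rp^4) (hr : rp ≤ r) :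
    0 < KerrF1 rp a l r := by
  unfold KerrF1
  have hr0 : 0 < r := lt_of_lt_of_le hrp hr
  have h1 : 0 ≤ (rp^4 - a^2*l^2)*(r^2 + rp*r) := by
    apply mul_nonneg (by linarith) (by positivity)
  have h2 : 0 < rp^6 + rp^4*a^2 + rp^4*l^2 + a^2*l^2*rp^2 := by positivity
  exact mul_pos (mul_pos hrp hr0) (by linarith)

lemma kerr_regroup (t1 t0 ta w X h H : ℝ) :
    (t1 + t0 + ta - w)*X + h - H = (t0 - w)*X + ((t1 + ta)*X + h - H) := by ring

lemma kerr_assemble {A B C D E : ℝ} (hA : 0 ≤ A) (hC : 0 ≤ C) (hBD : B + D = E)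
    (hE : 0 ≤ E) : 0 ≤ A + B + (C + D) := by linarith

lemma kerr_I1 (ℓ a rp lam m Dr r : ℝ)
    (hl : ℓ ≠ 0) (hs : r^2+a^2 ≠ 0) (hsp : rp^2+a^2 ≠ 0) (hD : Dr ≠ 0) :
    ((Dr*(lam + (m*a*(1-a^2/ℓ^2)/(rp^2+a^2))^2*a^2)
        - (1-a^2/ℓ^2)^2*a^2*m^2
        - 2*m*(m*a*(1-a^2/ℓ^2)/(rp^2+a^2))*a*(1-a^2/ℓ^2)*(Dr-(r^2+a^2)))/(r^2+a^2)^2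
      - (m*a*(1-a^2/ℓ^2)/(rp^2+a^2))^2) * ((r^2+a^2)/Dr)
    = (lam - (1-a^2/ℓ^2)^2*m^2)/(r^2+a^2)
      + m^2*(1-a^2/ℓ^2)^2*(rp^4*Dr - a^2*(r^2-rp^2)^2)/((rp^2+a^2)^2*(r^2+a^2)*Dr) := by
  field_simp
  ring

lemma kerr_I2 (ℓ a rp α θ ab c3 r : ℝ)
    (hl : ℓ ≠ 0) (hrp : rp ≠ 0) (hs : r^2+a^2 ≠ 0) (hsp : rp^2+a^2 ≠ 0)
    (hrrp : r - rp ≠ 0) (hC3 : c3 ≠ 0) :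
    ((-3)*r^2*((r-rp)*c3/(ℓ^2*rp))^2/(r^2+a^2)^4
      + ((r-rp)*c3/(ℓ^2*rp))*(5*r^4/ℓ^2+3*r^2*(1+a^2/ℓ^2)
          - 4*((rp^2+a^2)*(ℓ^2+rp^2)/(2*rp*ℓ^2))*r + a^2)/(r^2+a^2)^3
      + (-(α/ℓ^2)*((r-rp)*c3/(ℓ^2*rp))*(r^2+θ*a^2)/(r^2+a^2)^2))
      * ((r^2+a^2)/((r-rp)*c3/(ℓ^2*rp)))
    + 1/(2*ℓ^2) - (r-rp)^2*(r^2+a^2)/(4*ℓ^4*((r-rp)*c3/(ℓ^2*rp)))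
    = (ab/ℓ^2 - (α/ℓ^2)*(r^2+θ*a^2)/(r^2+a^2))
      + (r-rp)*((rp^2+a^2)^2*(4*(5*rp*r^4+3*rp*r^2*(ℓ^2+a^2)
            -2*r*(rp^2+a^2)*(ℓ^2+rp^2)+a^2*ℓ^2*rp)*(r^2+a^2)*c3
          - 12*r^2*(r-rp)*c3^2
          + (2-4*ab)*rp*c3*(r^2+a^2)^3
          - rp^2*(r-rp)*(r^2+a^2)^4))
        /(4*ℓ^4*rp^2*(rp^2+a^2)^2*((r-rp)*c3/(ℓ^2*rp))*(r^2+a^2)^3) := by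
  field_simp
  ring

lemma kerr_comb (ℓ a rp m c3 f1 p1 r : ℝ)
    (hl : ℓ ≠ 0) (hrp : rp ≠ 0) (hs : r^2+a^2 ≠ 0) (hsp : rp^2+a^2 ≠ 0)
    (hrrp : r - rp ≠ 0) (hC3 : c3 ≠ 0) :
    m^2*(1-a^2/ℓ^2)^2*((r-rp)*f1/(ℓ^2*rp))/((rp^2+a^2)^2*(r^2+a^2)*((r-rp)*c3/(ℓ^2*rp)))
    + (r-rp)*p1/(4*ℓ^4*rp^2*(rp^2+a^2)^2*((r-rp)*c3/(ℓ^2*rp))*(r^2+a^2)^3)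
    = (r-rp)*(m^2*(4*ℓ^2*(1-a^2/ℓ^2)^2*rp)*((r^2+a^2)^2*f1) + p1)
        /(4*ℓ^4*rp^2*(rp^2+a^2)^2*((r-rp)*c3/(ℓ^2*rp))*(r^2+a^2)^3) := by
  field_simp

theorem stmt_10 (ℓ M a rp : ℝ) (hℓ : 0 < ℓ) (hM : 0 < M) (ha : |a| < ℓ) (hrp : 0 < rp)
    (Δ : ℝ → ℝ) (hΔ : ∀ r, Δ r = (r ^ 2 + a ^ 2) * (1 + r ^ 2 / ℓ ^ 2) - 2 * M * r)
    (hroot : Δ rp = 0) (hmax : ∀ r, Δ r = 0 → r ≤ rp) (hd : 0 < deriv Δ rp)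
    (Ξ : ℝ) (hΞ : Ξ = 1 - a ^ 2 / ℓ ^ 2)
    (ha0 : 0 ≤ a) (hHR : a * ℓ ≤ rp ^ 2)
    (α : ℝ) (hα : α < 9 / 4) :
    ∃ m₀ : ℕ, ∀ m : ℤ, (m₀ : ℤ) ≤ |m| →
      ∀ lam : ℝ, Ξ ^ 2 * (m : ℝ) ^ 2 ≤ lam →
      ∀ f : ℝ → ℂ, ContDiff ℝ (⊤ : ℕ∞) f → HasCompactSupport f → tsupport f ⊆ Ioi rp →
      0 ≤ ∫ r in Ioi rp,
        (Δ r / (r ^ 2 + a ^ 2) * ‖deriv f r‖ ^ 2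
          + (((-3) * r ^ 2 * (Δ r) ^ 2 / (r ^ 2 + a ^ 2) ^ 4
              + Δ r * (5 * r ^ 4 / ℓ ^ 2 + 3 * r ^ 2 * (1 + a ^ 2 / ℓ ^ 2) - 4 * M * r + a ^ 2)
                / (r ^ 2 + a ^ 2) ^ 3)
            + ((Δ r * (lam + ((m : ℝ) * a * Ξ / (rp ^ 2 + a ^ 2)) ^ 2 * a ^ 2)
                - Ξ ^ 2 * a ^ 2 * (m : ℝ) ^ 2
                - 2 * (m : ℝ) * ((m : ℝ) * a * Ξ / (rp ^ 2 + a ^ 2)) * a * Ξ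
                  * (Δ r - (r ^ 2 + a ^ 2))) / (r ^ 2 + a ^ 2) ^ 2)
            + (-(α / ℓ ^ 2) * Δ r * (r ^ 2 + (if 0 < α then 1 else 0) * a ^ 2)
                / (r ^ 2 + a ^ 2) ^ 2)
            - ((m : ℝ) * a * Ξ / (rp ^ 2 + a ^ 2)) ^ 2)
            * ((r ^ 2 + a ^ 2) / Δ r) * ‖f r‖ ^ 2) := by
  subst hΞ
  have hl2 : (0:ℝ) < ℓ^2 := by positivity
  have habs := abs_lt.mp ha
  have ha2l : a^2 < ℓ^2 := by nlinarith [sq_abs a, abs_nonneg a]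
  have hXi : 0 < 1 - a^2/ℓ^2 := by
    rw [sub_pos, div_lt_one hl2]; exact ha2l
  have ha2rp : a^2 ≤ rp^2 := by nlinarith [habs.2]
  have hsp : (0:ℝ) < rp^2 + a^2 := by positivity
  -- value of M
  have hM' : M = (rp^2+a^2)*(ℓ^2+rp^2)/(2*rp*ℓ^2) := by
    have h0 : (rp^2+a^2)*(1+rp^2/ℓ^2) - 2*M*rp = 0 := by rw [← hΔ rp]; exact hroot
    field_simp at h0 ⊢
    nlinarith [h0]
  subst hM'
  -- factorization of Δ
  have hfact : ∀ r : ℝ, Δ r = (r - rp) * KerrC3 rp a ℓ r / (ℓ^2*rp) := by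
    intro r; rw [hΔ r]; unfold KerrC3; field_simp; ring
  have hC3pos : ∀ r, rp ≤ r → 0 < KerrC3 rp a ℓ r :=
    fun r hr => KerrC3_pos rp a ℓ r hrp hℓ ha2rp hr
  have hDpos : ∀ r, rp < r → 0 < Δ r := by
    intro r hr
    rw [hfact r]
    exact div_pos (mul_pos (sub_pos.mpr hr) (hC3pos r hr.le)) (by positivity)
  have hHR4 : a^2*ℓ^2 ≤ rp^4 := by nlinarith [mul_nonneg ha0 hℓ.le]
  have hF1pos : ∀ r, rp ≤ r → 0 < KerrF1 rp a ℓ r :=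
    fun r hr => KerrF1_pos rp a ℓ r hrp hℓ hHR4 hr
  set ab := max α 0 with hab
  have hab94 : ab < 9/4 := max_lt hα (by norm_num)
  -- eventual positivity of P1
  have hEE0 : 0 < KerrEE rp a ℓ ab 0 := by
    rw [KerrEE_zero]
    have h1 : 0 < (rp^2+a^2)^2*rp^2 := by positivity
    exact mul_pos h1 (by linarith)
  have hEEc : ContinuousAt (fun x => KerrEE rp a ℓ ab x) 0 := by
    unfold KerrEE; fun_prop
  obtain ⟨δ, hδpos, hδ⟩ := Metric.continuousAt_iff.mp hEEc (KerrEE rp a ℓ ab 0) hEE0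
  set R := rp + 1 + 1/δ with hR
  have hδinv : 0 < 1/δ := by positivity
  have hRrp : rp < R := by rw [hR]; linarith
  have hP1R : ∀ r, R ≤ r → 0 ≤ KerrP1 rp a ℓ ab r := by
    intro r hrR
    have hr0 : 0 < r := by rw [hR] at hrR; linarith
    have hδR : 1/δ < R := by rw [hR]; linarith
    have h1R : 1/r < δ := by
      rw [div_lt_iff₀ hr0]
      have h2 : δ * (1/δ) = 1 := by field_simp
      nlinarith [mul_lt_mul_of_pos_left (lt_of_lt_of_le hδR hrR) hδpos]
    have hdist : dist (1/r) (0:ℝ) < δ := by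
      rw [Real.dist_eq, sub_zero, abs_of_pos (by positivity)]; exact h1R
    have hE := hδ hdist
    rw [Real.dist_eq] at hE
    have hEpos : 0 < KerrEE rp a ℓ ab (1/r) := by
      rcases abs_lt.mp hE with ⟨h1, h2⟩; linarith
    rw [KerrP1_eq rp a ℓ ab r hr0]
    exact mul_nonneg (by positivity) hEpos.le
  -- minima on the compact part
  obtain ⟨r₁, hr₁, hmin1⟩ := isCompact_Icc.exists_isMinOn (nonempty_Icc.mpr hRrp.le)
      (Continuous.continuousOn (by unfold KerrF1; fun_prop :
        Continuous fun r => (r^2+a^2)^2 * KerrF1 rp a ℓ r))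
  obtain ⟨r₂, hr₂, hmin2⟩ := isCompact_Icc.exists_isMinOn (nonempty_Icc.mpr hRrp.le)
      (Continuous.continuousOn (by unfold KerrP1 KerrC3 KerrN1; fun_prop :
        Continuous fun r => KerrP1 rp a ℓ ab r))
  set δ₁ := (r₁^2+a^2)^2 * KerrF1 rp a ℓ r₁ with hδ₁def
  have hr₁s : (0:ℝ) < r₁^2+a^2 := by
    nlinarith [pow_pos (lt_of_lt_of_le hrp hr₁.1) 2, sq_nonneg a]
  have hδ₁pos : 0 < δ₁ := mul_pos (pow_pos hr₁s 2) (hF1pos r₁ hr₁.1)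
  set Cm := KerrP1 rp a ℓ ab r₂ with hCmdef
  have hc₁pos : 0 < 4*ℓ^2*(1-a^2/ℓ^2)^2*rp :=
    mul_pos (mul_pos (by positivity) (pow_pos hXi 2)) hrp
  obtain ⟨m₀, hm₀⟩ := exists_nat_ge (max 1 ((-Cm)/((4*ℓ^2*(1-a^2/ℓ^2)^2*rp)*δ₁)))
  refine ⟨m₀, fun m hm lam hlam f hfC hfsupp hfsub => ?_⟩
  -- numeric facts about m
  have hmabs : (m₀:ℝ) ≤ |(m:ℝ)| := by
    have : ((m₀:ℤ):ℝ) ≤ (|m|:ℝ) := by exact_mod_cast hm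
    simpa [Int.cast_abs] using this
  have hm0nn : (0:ℝ) ≤ (m₀:ℝ) := Nat.cast_nonneg m₀
  have hmsq : (m₀:ℝ)^2 ≤ (m:ℝ)^2 := by
    nlinarith [sq_abs (m:ℝ), abs_nonneg (m:ℝ)]
  -- the core bracket bound
  have hbr : ∀ r, rp < r →
      0 ≤ (m:ℝ)^2*(4*ℓ^2*(1-a^2/ℓ^2)^2*rp)*((r^2+a^2)^2*KerrF1 rp a ℓ r)
            + KerrP1 rp a ℓ ab r := by
    intro r hr
    rcases le_or_gt r R with hcase | hcase
    · have hFm : δ₁ ≤ (r^2+a^2)^2*KerrF1 rp a ℓ r := hmin1 ⟨hr.le, hcase⟩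
      have hPm : Cm ≤ KerrP1 rp a ℓ ab r := hmin2 ⟨hr.le, hcase⟩
      have h1 : (1:ℝ) ≤ (m₀:ℝ) := le_trans (le_max_left _ _) hm₀
      have h2 : (-Cm)/((4*ℓ^2*(1-a^2/ℓ^2)^2*rp)*δ₁) ≤ (m₀:ℝ) :=
        le_trans (le_max_right _ _) hm₀
      have hpos : 0 < (4*ℓ^2*(1-a^2/ℓ^2)^2*rp)*δ₁ := mul_pos hc₁pos hδ₁pos
      have h3 : -Cm ≤ (m₀:ℝ) * ((4*ℓ^2*(1-a^2/ℓ^2)^2*rp)*δ₁) := by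
        rwa [div_le_iff₀ hpos] at h2
      have h4 : (m₀:ℝ) ≤ (m₀:ℝ)^2 := by nlinarith
      have A1 : (m:ℝ)^2*(4*ℓ^2*(1-a^2/ℓ^2)^2*rp)*δ₁
          ≤ (m:ℝ)^2*(4*ℓ^2*(1-a^2/ℓ^2)^2*rp)*((r^2+a^2)^2*KerrF1 rp a ℓ r) := by
        apply mul_le_mul_of_nonneg_left hFm
        positivity
      have A2 : (m₀:ℝ)^2*((4*ℓ^2*(1-a^2/ℓ^2)^2*rp)*δ₁)
          ≤ (m:ℝ)^2*((4*ℓ^2*(1-a^2/ℓ^2)^2*rp)*δ₁) :=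
        mul_le_mul_of_nonneg_right hmsq hpos.le
      have A3 : (m₀:ℝ)*((4*ℓ^2*(1-a^2/ℓ^2)^2*rp)*δ₁)
          ≤ (m₀:ℝ)^2*((4*ℓ^2*(1-a^2/ℓ^2)^2*rp)*δ₁) :=
        mul_le_mul_of_nonneg_right h4 hpos.le
      linarith [A1, A2, A3, h3, hPm]
    · have h0 := hP1R r hcase.le
      have hF := (hF1pos r hr.le).le
      have : 0 ≤ (m:ℝ)^2*(4*ℓ^2*(1-a^2/ℓ^2)^2*rp)*((r^2+a^2)^2*KerrF1 rp a ℓ r) := by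
        apply mul_nonneg (mul_nonneg (sq_nonneg _) hc₁pos.le)
        exact mul_nonneg (by positivity) hF
      linarith
  -- the potential coefficient, packaged
  set W : ℝ → ℝ := fun r =>
      (((-3) * r ^ 2 * (Δ r) ^ 2 / (r ^ 2 + a ^ 2) ^ 4
        + Δ r * (5 * r ^ 4 / ℓ ^ 2 + 3 * r ^ 2 * (1 + a ^ 2 / ℓ ^ 2)
            - 4 * ((rp ^ 2 + a ^ 2) * (ℓ ^ 2 + rp ^ 2) / (2 * rp * ℓ ^ 2)) * r + a ^ 2)
          / (r ^ 2 + a ^ 2) ^ 3)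
      + ((Δ r * (lam + ((m : ℝ) * a * (1 - a ^ 2 / ℓ ^ 2) / (rp ^ 2 + a ^ 2)) ^ 2 * a ^ 2)
          - (1 - a ^ 2 / ℓ ^ 2) ^ 2 * a ^ 2 * (m : ℝ) ^ 2
          - 2 * (m : ℝ) * ((m : ℝ) * a * (1 - a ^ 2 / ℓ ^ 2) / (rp ^ 2 + a ^ 2)) * a
              * (1 - a ^ 2 / ℓ ^ 2)
            * (Δ r - (r ^ 2 + a ^ 2))) / (r ^ 2 + a ^ 2) ^ 2)
      + (-(α / ℓ ^ 2) * Δ r * (r ^ 2 + (if 0 < α then 1 else 0) * a ^ 2)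
          / (r ^ 2 + a ^ 2) ^ 2)
      - ((m : ℝ) * a * (1 - a ^ 2 / ℓ ^ 2) / (rp ^ 2 + a ^ 2)) ^ 2)
      * ((r ^ 2 + a ^ 2) / Δ r) with hW
  -- main pointwise inequality for the potential part
  have hQ : ∀ r, rp < r →
      0 ≤ W r + 1/(2*ℓ^2) - (r-rp)^2*(r^2+a^2)/(4*ℓ^4*Δ r) := by
    intro r hr
    have hr0 : 0 < r := hrp.trans hr
    have hs : (0:ℝ) < r^2+a^2 := by positivity
    have hc3 := hC3pos r hr.le
    have hrrp : r - rp ≠ 0 := sub_ne_zero.mpr (ne_of_gt hr)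
    simp only [hW]
    rw [hfact r]
    rw [kerr_regroup]
    rw [kerr_I1 ℓ a rp lam (m:ℝ) ((r-rp)*KerrC3 rp a ℓ r/(ℓ^2*rp)) r
      (ne_of_gt hℓ) (ne_of_gt hs) (ne_of_gt hsp)
      (by rw [← hfact r]; exact (hDpos r hr).ne')]
    rw [kerr_I2 ℓ a rp α (if 0 < α then (1:ℝ) else 0) ab (KerrC3 rp a ℓ r) r
      (ne_of_gt hℓ) (ne_of_gt hrp) (ne_of_gt hs) (ne_of_gt hsp) hrrp (ne_of_gt hc3)]
    have hFe : rp^4*((r-rp)*KerrC3 rp a ℓ r/(ℓ^2*rp)) - a^2*(r^2-rp^2)^2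
        = (r-rp)*KerrF1 rp a ℓ r/(ℓ^2*rp) := by
      unfold KerrF1 KerrC3; field_simp; ring
    rw [hFe]
    have he2 : (rp^2+a^2)^2*(4*(5*rp*r^4+3*rp*r^2*(ℓ^2+a^2)
            -2*r*(rp^2+a^2)*(ℓ^2+rp^2)+a^2*ℓ^2*rp)*(r^2+a^2)*KerrC3 rp a ℓ r
          - 12*r^2*(r-rp)*(KerrC3 rp a ℓ r)^2
          + (2-4*ab)*rp*KerrC3 rp a ℓ r*(r^2+a^2)^3
          - rp^2*(r-rp)*(r^2+a^2)^4) = KerrP1 rp a ℓ ab r := by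
      unfold KerrP1 KerrN1; ring
    rw [he2]
    have hcomb := kerr_comb ℓ a rp (m:ℝ) (KerrC3 rp a ℓ r) (KerrF1 rp a ℓ r)
      (KerrP1 rp a ℓ ab r) r
      (ne_of_gt hℓ) (ne_of_gt hrp) (ne_of_gt hs) (ne_of_gt hsp) hrrp (ne_of_gt hc3)
    have hDf : 0 < (r-rp)*KerrC3 rp a ℓ r/(ℓ^2*rp) :=
      div_pos (mul_pos (sub_pos.mpr hr) hc3) (by positivity)
    have hden : 0 < 4*ℓ^4*rp^2*(rp^2+a^2)^2*((r-rp)*KerrC3 rp a ℓ r/(ℓ^2*rp))*(r^2+a^2)^3 :=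
      mul_pos (mul_pos (by positivity) hDf) (pow_pos hs 3)
    have htot : 0 ≤ (r-rp)*((m:ℝ)^2*(4*ℓ^2*(1-a^2/ℓ^2)^2*rp)*((r^2+a^2)^2*KerrF1 rp a ℓ r)
          + KerrP1 rp a ℓ ab r)
        /(4*ℓ^4*rp^2*(rp^2+a^2)^2*((r-rp)*KerrC3 rp a ℓ r/(ℓ^2*rp))*(r^2+a^2)^3) :=
      div_nonneg (mul_nonneg (sub_pos.mpr hr).le (hbr r hr)) hden.le
    have hμ : 0 ≤ (lam - (1-a^2/ℓ^2)^2*(m:ℝ)^2)/(r^2+a^2) :=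
      div_nonneg (by linarith [hlam]) hs.le
    have hmid : 0 ≤ ab/ℓ^2 - (α/ℓ^2)*(r^2+(if 0 < α then (1:ℝ) else 0)*a^2)/(r^2+a^2) := by
      by_cases hα0 : 0 < α
      · rw [if_pos hα0, hab, max_eq_left hα0.le, one_mul]
        have heq1 : (α/ℓ^2)*(r^2+a^2)/(r^2+a^2) = α/ℓ^2 := by
          rw [mul_div_assoc, div_self (ne_of_gt hs), mul_one]
        rw [heq1]
        simp
      · rw [if_neg hα0, hab, max_eq_right (not_lt.mp hα0), zero_mul, add_zero, zero_div]
        have h1 : α/ℓ^2 ≤ 0 := div_nonpos_of_nonpos_of_nonneg (not_lt.mp hα0) hl2.le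
        have h2 : (α/ℓ^2)*r^2/(r^2+a^2) ≤ 0 :=
          div_nonpos_of_nonpos_of_nonneg (mul_nonpos_of_nonpos_of_nonneg h1 (sq_nonneg r)) hs.le
        linarith
    exact kerr_assemble hμ hmid hcomb htot
  -- rewrite the goal using W
  have hIeq : (fun r : ℝ => Δ r / (r ^ 2 + a ^ 2) * ‖deriv f r‖ ^ 2 + W r * ‖f r‖ ^ 2)
      = (fun r : ℝ =>
        Δ r / (r ^ 2 + a ^ 2) * ‖deriv f r‖ ^ 2
          + (((-3) * r ^ 2 * (Δ r) ^ 2 / (r ^ 2 + a ^ 2) ^ 4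
              + Δ r * (5 * r ^ 4 / ℓ ^ 2 + 3 * r ^ 2 * (1 + a ^ 2 / ℓ ^ 2)
                  - 4 * ((rp ^ 2 + a ^ 2) * (ℓ ^ 2 + rp ^ 2) / (2 * rp * ℓ ^ 2)) * r + a ^ 2)
                / (r ^ 2 + a ^ 2) ^ 3)
            + ((Δ r * (lam + ((m : ℝ) * a * (1 - a ^ 2 / ℓ ^ 2) / (rp ^ 2 + a ^ 2)) ^ 2 * a ^ 2)
                - (1 - a ^ 2 / ℓ ^ 2) ^ 2 * a ^ 2 * (m : ℝ) ^ 2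
                - 2 * (m : ℝ) * ((m : ℝ) * a * (1 - a ^ 2 / ℓ ^ 2) / (rp ^ 2 + a ^ 2)) * a
                    * (1 - a ^ 2 / ℓ ^ 2)
                  * (Δ r - (r ^ 2 + a ^ 2))) / (r ^ 2 + a ^ 2) ^ 2)
            + (-(α / ℓ ^ 2) * Δ r * (r ^ 2 + (if 0 < α then 1 else 0) * a ^ 2)
                / (r ^ 2 + a ^ 2) ^ 2)
            - ((m : ℝ) * a * (1 - a ^ 2 / ℓ ^ 2) / (rp ^ 2 + a ^ 2)) ^ 2)
            * ((r ^ 2 + a ^ 2) / Δ r) * ‖f r‖ ^ 2) := by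
    funext r; rw [hW]
  rw [← hIeq]
  -- analytic preliminaries about f
  have hfd : Differentiable ℝ f := hfC.differentiable (by simp)
  have hf'c : Continuous (deriv f) := hfC.continuous_deriv (by simp)
  have hΔcont : Continuous Δ := by
    have : Δ = fun r => (r^2+a^2)*(1+r^2/ℓ^2) - 2*((rp^2+a^2)*(ℓ^2+rp^2)/(2*rp*ℓ^2))*r :=
      funext hΔ
    rw [this]; fun_prop
  have hf0 : ∀ r, r ∉ tsupport f → f r = 0 := fun r hr => image_eq_zero_of_notMem_tsupport hr
  have hf'0 : ∀ r, r ∉ tsupport f → deriv f r = 0 := fun r hr =>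
    Function.notMem_support.mp (fun hc => hr (support_deriv_subset hc))
  have hu : ∀ r : ℝ, HasDerivAt (fun t => ‖f t‖^2)
      (2*((f r).re*(deriv f r).re + (f r).im*(deriv f r).im)) r := by
    intro r
    have hfr : HasDerivAt f (deriv f r) r := (hfd r).hasDerivAt
    have hre : HasDerivAt (fun t => (f t).re) ((deriv f r).re) r :=
      (Complex.reCLM.hasFDerivAt.comp_hasDerivAt r hfr)
    have him : HasDerivAt (fun t => (f t).im) ((deriv f r).im) r :=
      (Complex.imCLM.hasFDerivAt.comp_hasDerivAt r hfr)
    have h2 := (hre.mul hre).add (him.mul him)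
    have hnorm : (fun t => ‖f t‖^2) = (fun t => (f t).re*(f t).re + (f t).im*(f t).im) := by
      funext t
      rw [← Complex.normSq_eq_norm_sq, Complex.normSq_apply]
    rw [hnorm]
    exact h2.congr_deriv (by ring)
  -- the boundary function g and its derivative g'
  set g : ℝ → ℝ := fun r => (r - rp)/(2*ℓ^2) * ‖f r‖^2 with hg
  set g' : ℝ → ℝ := fun r => 1/(2*ℓ^2) * ‖f r‖^2
      + (r - rp)/(2*ℓ^2) * (2*((f r).re*(deriv f r).re + (f r).im*(deriv f r).im)) with hg'
  have hgd : ∀ r, HasDerivAt g (g' r) r := by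
    intro r
    have h1 : HasDerivAt (fun t:ℝ => (t - rp)/(2*ℓ^2)) (1/(2*ℓ^2)) r := by
      have := ((hasDerivAt_id r).sub_const rp).div_const (2*ℓ^2)
      simpa using this
    have := h1.mul (hu r)
    rw [hg, hg']
    exact this
  have hg'c : Continuous g' := by
    rw [hg']
    have h1 : Continuous fun r => ‖f r‖^2 := (hfC.continuous.norm.pow 2)
    fun_prop
  have hg'0 : ∀ r, r ∉ tsupport f → g' r = 0 := by
    intro r hr
    simp [hg', hf0 r hr, hf'0 r hr]
  have hg'int : IntegrableOn g' (Ioi rp) := by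
    have h1 : IntegrableOn g' (tsupport f) :=
      hg'c.continuousOn.integrableOn_compact (hfsupp : IsCompact (tsupport f))
    exact h1.of_forall_diff_eq_zero measurableSet_Ioi (fun x hx => hg'0 x hx.2)
  -- ∫ g' = 0
  obtain ⟨d, hdbd⟩ : ∃ d, ∀ x ∈ tsupport f, x ≤ d := by
    rcases (tsupport f).eq_empty_or_nonempty with h | h
    · exact ⟨rp, by simp [h]⟩
    · obtain ⟨d, hd2⟩ := (hfsupp : IsCompact (tsupport f)).bddAbove
      exact ⟨d, fun x hx => hd2 hx⟩
  have hgtend : Filter.Tendsto g Filter.atTop (nhds 0) := by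
    apply Filter.Tendsto.congr' _ tendsto_const_nhds
    filter_upwards [Filter.eventually_gt_atTop d] with x hx
    have hx0 : x ∉ tsupport f := fun hK => absurd (hdbd x hK) (not_le.mpr hx)
    simp [hg, hf0 x hx0]
  have hgrp : g rp = 0 := by simp [hg]
  have hint0 : ∫ r in Ioi rp, g' r = 0 := by
    have := integral_Ioi_of_hasDerivAt_of_tendsto (f := g) (f' := g') (a := rp) (m := 0)
      ((hgd rp).continuousAt.continuousWithinAt) (fun x _ => hgd x) hg'int hgtend
    rw [this, hgrp, zero_sub, neg_eq_zero]
  -- continuity and integrability of the integrand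
  have hsne : ∀ x : ℝ, x ∈ Ioi rp → (x^2+a^2) ≠ 0 := by
    intro x hx
    have : (0:ℝ) < x := hrp.trans hx
    positivity
  have hΔne : ∀ x : ℝ, x ∈ Ioi rp → Δ x ≠ 0 := fun x hx => (hDpos x hx).ne'
  have hWc : ContinuousOn W (Ioi rp) := by
    rw [hW]
    apply ContinuousOn.mul
    · apply ContinuousOn.sub
      · apply ContinuousOn.add
        apply ContinuousOn.add
        · apply ContinuousOn.add
          · exact ((by fun_prop : Continuous fun r:ℝ => (-3) * r ^ 2 * (Δ r) ^ 2).continuousOn).div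
              ((by fun_prop : Continuous fun r:ℝ => (r^2+a^2)^4).continuousOn)
              (fun x hx => pow_ne_zero _ (hsne x hx))
          · exact ((by fun_prop : Continuous fun r:ℝ =>
                Δ r * (5 * r ^ 4 / ℓ ^ 2 + 3 * r ^ 2 * (1 + a ^ 2 / ℓ ^ 2)
                  - 4 * ((rp ^ 2 + a ^ 2) * (ℓ ^ 2 + rp ^ 2) / (2 * rp * ℓ ^ 2)) * r
                  + a ^ 2)).continuousOn).div
              ((by fun_prop : Continuous fun r:ℝ => (r^2+a^2)^3).continuousOn)
              (fun x hx => pow_ne_zero _ (hsne x hx))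
        · exact ((by fun_prop : Continuous fun r:ℝ =>
              Δ r * (lam + ((m : ℝ) * a * (1 - a ^ 2 / ℓ ^ 2) / (rp ^ 2 + a ^ 2)) ^ 2 * a ^ 2)
              - (1 - a ^ 2 / ℓ ^ 2) ^ 2 * a ^ 2 * (m : ℝ) ^ 2
              - 2 * (m : ℝ) * ((m : ℝ) * a * (1 - a ^ 2 / ℓ ^ 2) / (rp ^ 2 + a ^ 2)) * a
                  * (1 - a ^ 2 / ℓ ^ 2) * (Δ r - (r ^ 2 + a ^ 2))).continuousOn).div
            ((by fun_prop : Continuous fun r:ℝ => (r^2+a^2)^2).continuousOn)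
            (fun x hx => pow_ne_zero _ (hsne x hx))
        · exact ((by fun_prop : Continuous fun r:ℝ =>
              -(α / ℓ ^ 2) * Δ r * (r ^ 2 + (if 0 < α then 1 else 0) * a ^ 2)).continuousOn).div
            ((by fun_prop : Continuous fun r:ℝ => (r^2+a^2)^2).continuousOn)
            (fun x hx => pow_ne_zero _ (hsne x hx))
      · exact continuousOn_const
    · exact ((by fun_prop : Continuous fun r:ℝ => r^2+a^2).continuousOn).div
        hΔcont.continuousOn hΔne
  set J : ℝ → ℝ := fun r => Δ r / (r ^ 2 + a ^ 2) * ‖deriv f r‖ ^ 2 + W r * ‖f r‖ ^ 2 with hJ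
  have hJc : ContinuousOn J (Ioi rp) := by
    rw [hJ]
    apply ContinuousOn.add
    · exact ((hΔcont.continuousOn).div
        ((by fun_prop : Continuous fun r:ℝ => r^2+a^2).continuousOn) hsne).mul
        (hf'c.norm.pow 2).continuousOn
    · exact hWc.mul (hfC.continuous.norm.pow 2).continuousOn
  have hJ0 : ∀ r, r ∉ tsupport f → J r = 0 := by
    intro r hr
    simp [hJ, hf0 r hr, hf'0 r hr]
  have hJint : IntegrableOn J (Ioi rp) := by
    have h1 : IntegrableOn J (tsupport f) :=
      (hJc.mono hfsub).integrableOn_compact (hfsupp : IsCompact (tsupport f))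
    exact h1.of_forall_diff_eq_zero measurableSet_Ioi (fun x hx => hJ0 x hx.2)
  -- pointwise nonnegativity of J + g'
  have hpt : ∀ r ∈ Ioi rp, 0 ≤ J r + g' r := by
    intro r hr
    have hr' : rp < r := hr
    have hD := hDpos r hr'
    have hr0 : 0 < r := hrp.trans hr'
    have hs : (0:ℝ) < r^2+a^2 := by positivity
    have hw : 0 < Δ r/(r^2+a^2) := div_pos hD hs
    have hsq := Kerr_sq_helper (Δ r/(r^2+a^2)) ((r-rp)/(2*ℓ^2))
      (f r).re (f r).im (deriv f r).re (deriv f r).im hw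
    have hq := hQ r hr'
    have hΔne : Δ r ≠ 0 := hD.ne'
    have hconv : ((r-rp)/(2*ℓ^2))^2/(Δ r/(r^2+a^2)) = (r-rp)^2*(r^2+a^2)/(4*ℓ^4*Δ r) := by
      field_simp [hΔne]
      ring
    have hq' : 0 ≤ W r + 1/(2*ℓ^2) - ((r-rp)/(2*ℓ^2))^2/(Δ r/(r^2+a^2)) := by
      rw [hconv]; exact hq
    have hnorm1 : ‖f r‖^2 = (f r).re^2 + (f r).im^2 := by
      rw [← Complex.normSq_eq_norm_sq, Complex.normSq_apply]; ring
    have hnorm2 : ‖deriv f r‖^2 = (deriv f r).re^2 + (deriv f r).im^2 := by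
      rw [← Complex.normSq_eq_norm_sq, Complex.normSq_apply]; ring
    have heq : J r + g' r
        = (Δ r/(r^2+a^2) * ((deriv f r).re^2+(deriv f r).im^2)
            + 2*((r-rp)/(2*ℓ^2))*((f r).re*(deriv f r).re + (f r).im*(deriv f r).im)
            + ((r-rp)/(2*ℓ^2))^2/(Δ r/(r^2+a^2))*((f r).re^2+(f r).im^2))
          + (W r + 1/(2*ℓ^2) - ((r-rp)/(2*ℓ^2))^2/(Δ r/(r^2+a^2)))
            * ((f r).re^2+(f r).im^2) := by
      rw [hJ, hg']
      simp only []
      rw [hnorm1, hnorm2]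
      ring
    rw [heq]
    have h2 := mul_nonneg hq' (by positivity : (0:ℝ) ≤ (f r).re^2+(f r).im^2)
    linarith [hsq, h2]
  -- assembling
  have h1 : 0 ≤ ∫ r in Ioi rp, (J r + g' r) := setIntegral_nonneg measurableSet_Ioi hpt
  have h2 : ∫ r in Ioi rp, (J r + g' r)
      = (∫ r in Ioi rp, J r) + ∫ r in Ioi rp, g' r := integral_add hJint hg'int
  have h3 : 0 ≤ ∫ r in Ioi rp, J r := by
    rw [h2, hint0, add_zero] at h1
    exact h1
  exact h3
end

section
/- Let 0<κ<1 and r_cut>0, and let f:[r_cut,∞)→ℂ be smooth such that r^{1/2−κ}f(r) is bounded as r→∞ and the right-hand side below is finite. Then ∫_{r_cut}^∞ |f(r)|²/r² dr ≤ (1/(1−κ))·r_cut^{−1}·|f(r_cut)|² + (1/(1−κ)²)·∫_{r_cut}^∞ r^{−1+2κ}·| d/dr ( r^{1/2−κ} f(r) ) |² dr. -/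
open Real MeasureTheory Filter Set

set_option maxHeartbeats 1000000 in
theorem stmt_11 (κ rcut : ℝ) (hκ0 : 0 < κ) (hκ1 : κ < 1) (hrcut : 0 < rcut)
    (f : ℝ → ℂ) (hf : ContDiffOn ℝ (⊤ : ℕ∞) f (Ici rcut))
    (hbdd : ∃ C : ℝ, ∀ᶠ r in atTop, ‖((r ^ ((1 : ℝ) / 2 - κ) : ℝ) : ℂ) * f r‖ ≤ C)
    (hfin : IntegrableOn
      (fun r : ℝ => r ^ (-1 + 2 * κ) *
        ‖deriv (fun s : ℝ => ((s ^ ((1 : ℝ) / 2 - κ) : ℝ) : ℂ) * f s) r‖ ^ 2)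
      (Ioi rcut)) :
    (∫ r in Ioi rcut, ‖f r‖ ^ 2 / r ^ 2) ≤
      1 / (1 - κ) * rcut⁻¹ * ‖f rcut‖ ^ 2
      + 1 / (1 - κ) ^ 2 *
        ∫ r in Ioi rcut, r ^ (-1 + 2 * κ) *
          ‖deriv (fun s : ℝ => ((s ^ ((1 : ℝ) / 2 - κ) : ℝ) : ℂ) * f s) r‖ ^ 2 := by
  clear hbdd
  have hκ' : (0 : ℝ) < 1 - κ := by linarith
  set p : ℝ := (1 : ℝ) / 2 - κ with hp
  set g : ℝ → ℂ := fun s : ℝ => ((s ^ p : ℝ) : ℂ) * f s with hgdef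
  set B : ℝ := ∫ r in Ioi rcut, r ^ (-1 + 2 * κ) * ‖deriv g r‖ ^ 2 with hB
  have hpos : ∀ r ∈ Ici rcut, (0:ℝ) < r := fun r hr => lt_of_lt_of_le hrcut hr
  -- smoothness of g
  have hg1 : ContDiffOn ℝ 1 g (Ici rcut) := by
    have h1 : ContDiffOn ℝ 1 (fun s : ℝ => ((s ^ p : ℝ) : ℂ)) (Ici rcut) := by
      intro s hs
      exact (Complex.ofRealCLM.contDiff.contDiffAt.comp s
        (Real.contDiffAt_rpow_const_of_ne (ne_of_gt (hpos s hs)))).contDiffWithinAt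
    exact h1.mul (hf.of_le (by simp))
  set Dw : ℝ → ℂ := derivWithin g (Ici rcut) with hDwdef
  have hDwc : ContinuousOn Dw (Ici rcut) :=
    hg1.continuousOn_derivWithin (uniqueDiffOn_Ici rcut) le_rfl
  have hgcont : ContinuousOn g (Ici rcut) := hg1.continuousOn
  have hDw_eq : ∀ r ∈ Ioi rcut, Dw r = deriv g r := fun r hr =>
    derivWithin_of_mem_nhds (Ici_mem_nhds hr)
  have hgderiv : ∀ r ∈ Ioi rcut, HasDerivAt g (Dw r) r := by
    intro r hr
    rw [hDw_eq r hr]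
    exact ((hg1.contDiffAt (Ici_mem_nhds hr)).differentiableAt one_ne_zero).hasDerivAt
  -- derivative of the squared norm
  have hnormsq : ∀ z : ℂ, ‖z‖ ^ 2 = z.re ^ 2 + z.im ^ 2 := by
    intro z
    rw [Complex.sq_norm, Complex.normSq_apply]
    ring
  have hNderiv : ∀ r ∈ Ioi rcut, HasDerivAt (fun s => ‖g s‖ ^ 2)
      (2 * (g r).re * (Dw r).re + 2 * (g r).im * (Dw r).im) r := by
    intro r hr
    have hre : HasDerivAt (fun s => (g s).re) ((Dw r).re) r :=
      Complex.reCLM.hasFDerivAt.comp_hasDerivAt r (hgderiv r hr)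
    have him : HasDerivAt (fun s => (g s).im) ((Dw r).im) r :=
      Complex.imCLM.hasFDerivAt.comp_hasDerivAt r (hgderiv r hr)
    have hsum := (hre.pow 2).add (him.pow 2)
    have heq : ((fun s => (g s).re) ^ 2 + (fun s => (g s).im) ^ 2) = fun s => ‖g s‖ ^ 2 := by
      funext s; simp only [Pi.add_apply, Pi.pow_apply]; rw [hnormsq]
    rw [heq] at hsum
    refine hsum.congr_deriv ?_
    push_cast
    ring
  -- the function φ and its derivative ψ
  set φ : ℝ → ℝ := fun r => r ^ (-2 + 2 * κ) * ‖g r‖ ^ 2 with hφdef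
  set ψ : ℝ → ℝ := fun r => (-2 + 2 * κ) * r ^ (-3 + 2 * κ) * ‖g r‖ ^ 2
      + r ^ (-2 + 2 * κ) * (2 * (g r).re * (Dw r).re + 2 * (g r).im * (Dw r).im) with hψdef
  have hφderiv : ∀ r ∈ Ioi rcut, HasDerivAt φ (ψ r) r := by
    intro r hr
    have hr0 : (0:ℝ) < r := lt_trans hrcut hr
    have h1 : HasDerivAt (fun s : ℝ => s ^ (-2 + 2 * κ))
        ((-2 + 2 * κ) * r ^ (-3 + 2 * κ)) r := by
      have h := Real.hasDerivAt_rpow_const (x := r) (p := -2 + 2 * κ) (Or.inl (ne_of_gt hr0))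
      rw [show (-2 + 2 * κ - 1 : ℝ) = -3 + 2 * κ by ring] at h
      exact h
    exact h1.mul (hNderiv r hr)
  -- continuity helpers
  have hrpowcont : ∀ c : ℝ, ContinuousOn (fun r : ℝ => r ^ c) (Ici rcut) := fun c r hr =>
    (Real.continuousAt_rpow_const r c (Or.inl (ne_of_gt (hpos r hr)))).continuousWithinAt
  have hGn : ContinuousOn (fun r => ‖g r‖ ^ 2) (Ici rcut) := (hgcont.norm).pow 2
  have hDnc : ContinuousOn (fun r => ‖Dw r‖ ^ 2) (Ici rcut) := (hDwc.norm).pow 2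
  have hψcont : ContinuousOn ψ (Ici rcut) := by
    apply ContinuousOn.add
    · exact (continuousOn_const.mul (hrpowcont _)).mul hGn
    · refine (hrpowcont _).mul (ContinuousOn.add ?_ ?_)
      · exact (continuousOn_const.mul (Complex.continuous_re.comp_continuousOn hgcont)).mul
          (Complex.continuous_re.comp_continuousOn hDwc)
      · exact (continuousOn_const.mul (Complex.continuous_im.comp_continuousOn hgcont)).mul
          (Complex.continuous_im.comp_continuousOn hDwc)
  have hφcont : ContinuousOn φ (Ici rcut) := (hrpowcont _).mul hGn
  have hucont : ContinuousOn (fun r : ℝ => r ^ (-3 + 2 * κ) * ‖g r‖ ^ 2) (Ici rcut) :=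
    (hrpowcont _).mul hGn
  have hvcont : ContinuousOn (fun r : ℝ => r ^ (-1 + 2 * κ) * ‖Dw r‖ ^ 2) (Ici rcut) :=
    (hrpowcont _).mul hDnc
  -- pointwise bound  ψ ≤ (κ-1) u + (1/(1-κ)) v
  have hbound : ∀ r ∈ Ici rcut, ψ r ≤ (κ - 1) * (r ^ (-3 + 2 * κ) * ‖g r‖ ^ 2)
      + 1 / (1 - κ) * (r ^ (-1 + 2 * κ) * ‖Dw r‖ ^ 2) := by
    intro r hr
    have hr0 : (0:ℝ) < r := hpos r hr
    set x : ℝ := r ^ ((-3 + 2 * κ) / 2) with hx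
    set y : ℝ := r ^ ((-1 + 2 * κ) / 2) with hy
    have hx2 : x * x = r ^ (-3 + 2 * κ) := by
      rw [hx, ← Real.rpow_add hr0]; congr 1; ring
    have hy2 : y * y = r ^ (-1 + 2 * κ) := by
      rw [hy, ← Real.rpow_add hr0]; congr 1; ring
    have hxy : x * y = r ^ (-2 + 2 * κ) := by
      rw [hx, hy, ← Real.rpow_add hr0]; congr 1; ring
    have hxpos : 0 < x := Real.rpow_pos_of_pos hr0 _
    have hypos : 0 < y := Real.rpow_pos_of_pos hr0 _
    set G : ℝ := ‖g r‖ with hG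
    set Dn : ℝ := ‖Dw r‖ with hDnn
    have hG0 : 0 ≤ G := norm_nonneg _
    have hDn0 : 0 ≤ Dn := norm_nonneg _
    have hCS : (g r).re * (Dw r).re + (g r).im * (Dw r).im ≤ G * Dn := by
      have h1 : (g r).re * (Dw r).re + (g r).im * (Dw r).im
          = ((starRingEnd ℂ) (g r) * Dw r).re := by
        simp only [Complex.mul_re, Complex.conj_re, Complex.conj_im]
        ring
      rw [h1]
      calc ((starRingEnd ℂ) (g r) * Dw r).re ≤ ‖(starRingEnd ℂ) (g r) * Dw r‖ :=
            Complex.re_le_norm _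
        _ = G * Dn := by
            rw [hG, hDnn, norm_mul, Complex.norm_conj]
    have hGsq : ‖g r‖ ^ 2 = G * G := by rw [hG]; ring
    have hDsq : ‖Dw r‖ ^ 2 = Dn * Dn := by rw [hDnn]; ring
    have key : 2 * (x * y) * (G * Dn) ≤ (1 - κ) * (x * x) * (G * G)
        + 1 / (1 - κ) * ((y * y) * (Dn * Dn)) := by
      have h8 : 2 * (x * y) * (G * Dn) * (1 - κ)
          ≤ ((1 - κ) * (x * x) * (G * G)) * (1 - κ) + (y * y) * (Dn * Dn) := by
        nlinarith [sq_nonneg ((1 - κ) * (x * G) - y * Dn)]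
      have h9 : ((1 - κ) * (x * x) * (G * G) + 1 / (1 - κ) * ((y * y) * (Dn * Dn))) * (1 - κ)
          = ((1 - κ) * (x * x) * (G * G)) * (1 - κ) + (y * y) * (Dn * Dn) := by
        field_simp <;> ring
      have h10 : 2 * (x * y) * (G * Dn) * (1 - κ)
          ≤ ((1 - κ) * (x * x) * (G * G) + 1 / (1 - κ) * ((y * y) * (Dn * Dn))) * (1 - κ) := by
        rw [h9]; exact h8
      exact le_of_mul_le_mul_right h10 hκ'
    have h2 : r ^ (-2 + 2 * κ) * (2 * (g r).re * (Dw r).re + 2 * (g r).im * (Dw r).im)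
        ≤ 2 * (x * y) * (G * Dn) := by
      rw [← hxy]
      nlinarith [mul_le_mul_of_nonneg_left hCS (mul_pos hxpos hypos).le]
    have hmain : r ^ (-2 + 2 * κ) * (2 * (g r).re * (Dw r).re + 2 * (g r).im * (Dw r).im)
        ≤ (1 - κ) * (r ^ (-3 + 2 * κ) * ‖g r‖ ^ 2)
          + 1 / (1 - κ) * (r ^ (-1 + 2 * κ) * ‖Dw r‖ ^ 2) := by
      calc r ^ (-2 + 2 * κ) * (2 * (g r).re * (Dw r).re + 2 * (g r).im * (Dw r).im)
          ≤ 2 * (x * y) * (G * Dn) := h2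
        _ ≤ (1 - κ) * (x * x) * (G * G) + 1 / (1 - κ) * ((y * y) * (Dn * Dn)) := key
        _ = (1 - κ) * (r ^ (-3 + 2 * κ) * ‖g r‖ ^ 2)
            + 1 / (1 - κ) * (r ^ (-1 + 2 * κ) * ‖Dw r‖ ^ 2) := by
            rw [hx2, hy2, hGsq, hDsq]; ring
    simp only [hψdef]
    linarith only [hmain]
  -- main estimate on each finite interval
  have main : ∀ R : ℝ, rcut ≤ R →
      (∫ r in Ioc rcut R, ‖f r‖ ^ 2 / r ^ 2)
        ≤ 1 / (1 - κ) * rcut⁻¹ * ‖f rcut‖ ^ 2 + 1 / (1 - κ) ^ 2 * B := by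
    intro R hR
    have hsub : Icc rcut R ⊆ Ici rcut := Icc_subset_Ici_self
    have hsub' : uIcc rcut R ⊆ Ici rcut := by rw [uIcc_of_le hR]; exact hsub
    have hintψ : IntervalIntegrable ψ volume rcut R :=
      (hψcont.mono hsub').intervalIntegrable
    have hintu : IntervalIntegrable (fun r : ℝ => r ^ (-3 + 2 * κ) * ‖g r‖ ^ 2) volume rcut R :=
      (hucont.mono hsub').intervalIntegrable
    have hintv : IntervalIntegrable (fun r : ℝ => r ^ (-1 + 2 * κ) * ‖Dw r‖ ^ 2) volume rcut R :=
      (hvcont.mono hsub').intervalIntegrable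
    -- FTC
    have hftc : ∫ r in rcut..R, ψ r = φ R - φ rcut := by
      apply intervalIntegral.integral_eq_sub_of_hasDeriv_right_of_le hR
        (hφcont.mono hsub) _ hintψ
      intro x hx
      exact (hφderiv x hx.1).hasDerivWithinAt
    -- bound the integral of ψ
    set IA : ℝ := ∫ r in rcut..R, r ^ (-3 + 2 * κ) * ‖g r‖ ^ 2 with hIA
    set IB : ℝ := ∫ r in rcut..R, r ^ (-1 + 2 * κ) * ‖Dw r‖ ^ 2 with hIB
    have hψle : ∫ r in rcut..R, ψ r ≤ (κ - 1) * IA + 1 / (1 - κ) * IB := by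
      have h1 : ∫ r in rcut..R, ψ r ≤ ∫ r in rcut..R,
          ((κ - 1) * (r ^ (-3 + 2 * κ) * ‖g r‖ ^ 2)
            + 1 / (1 - κ) * (r ^ (-1 + 2 * κ) * ‖Dw r‖ ^ 2)) := by
        apply intervalIntegral.integral_mono_on hR hintψ
          ((hintu.const_mul _).add (hintv.const_mul _))
        intro x hx
        exact hbound x (hsub hx)
      rw [intervalIntegral.integral_add (hintu.const_mul _) (hintv.const_mul _),
        intervalIntegral.integral_const_mul, intervalIntegral.integral_const_mul] at h1
      exact h1
    -- identify IA with the LHS integral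
    have hIAeq : IA = ∫ r in Ioc rcut R, ‖f r‖ ^ 2 / r ^ 2 := by
      rw [hIA, intervalIntegral.integral_of_le hR]
      apply setIntegral_congr_fun measurableSet_Ioc
      intro r hr
      have hr0 : (0:ℝ) < r := lt_trans hrcut hr.1
      have h1 : ‖g r‖ = r ^ p * ‖f r‖ := by
        simp [hgdef, norm_mul, Complex.norm_real,
          abs_of_nonneg (Real.rpow_nonneg hr0.le p)]
      have h2 : (r ^ p) ^ 2 = r ^ ((1:ℝ) - 2 * κ) := by
        rw [← Real.rpow_natCast (r ^ p) 2, ← Real.rpow_mul hr0.le]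
        congr 1
        rw [hp]; push_cast; ring
      have h3 : r ^ (-3 + 2 * κ) * r ^ ((1:ℝ) - 2 * κ) = (r ^ 2)⁻¹ := by
        rw [← Real.rpow_add hr0,
          show (-3 + 2 * κ + ((1:ℝ) - 2 * κ)) = ((-2 : ℤ) : ℝ) by push_cast; ring,
          Real.rpow_intCast, zpow_neg, zpow_two, sq]
      show r ^ (-3 + 2 * κ) * ‖g r‖ ^ 2 = ‖f r‖ ^ 2 / r ^ 2
      rw [h1, mul_pow, h2,
        show r ^ (-3 + 2 * κ) * (r ^ ((1:ℝ) - 2 * κ) * ‖f r‖ ^ 2)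
          = (r ^ (-3 + 2 * κ) * r ^ ((1:ℝ) - 2 * κ)) * ‖f r‖ ^ 2 by ring, h3]
      rw [div_eq_mul_inv, mul_comm]
    -- IB is bounded by B
    have hIBle : IB ≤ B := by
      rw [hIB, intervalIntegral.integral_of_le hR, hB]
      have hcongr : ∫ r in Ioc rcut R, r ^ (-1 + 2 * κ) * ‖Dw r‖ ^ 2
          = ∫ r in Ioc rcut R, r ^ (-1 + 2 * κ) * ‖deriv g r‖ ^ 2 := by
        apply setIntegral_congr_fun measurableSet_Ioc
        intro r hr
        show r ^ (-1 + 2 * κ) * ‖Dw r‖ ^ 2 = r ^ (-1 + 2 * κ) * ‖deriv g r‖ ^ 2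
        rw [hDw_eq r hr.1]
      rw [hcongr]
      apply setIntegral_mono_set hfin
      · refine (ae_restrict_iff' measurableSet_Ioi).2 (Eventually.of_forall fun r hr => ?_)
        exact mul_nonneg (Real.rpow_nonneg (le_of_lt (lt_trans hrcut hr)) _) (sq_nonneg _)
      · exact HasSubset.Subset.eventuallyLE Ioc_subset_Ioi_self
    -- positivity of φ R and value of φ rcut
    have hφR : 0 ≤ φ R := by
      simp only [hφdef]
      exact mul_nonneg (Real.rpow_nonneg (le_of_lt (lt_of_lt_of_le hrcut hR)) _) (sq_nonneg _)
    have hφrcut : φ rcut = rcut⁻¹ * ‖f rcut‖ ^ 2 := by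
      simp only [hφdef]
      have h1 : ‖g rcut‖ = rcut ^ p * ‖f rcut‖ := by
        simp [hgdef, norm_mul, Complex.norm_real,
          abs_of_nonneg (Real.rpow_nonneg hrcut.le p)]
      have h2 : (rcut ^ p) ^ 2 = rcut ^ ((1:ℝ) - 2 * κ) := by
        rw [← Real.rpow_natCast (rcut ^ p) 2, ← Real.rpow_mul hrcut.le]
        congr 1
        rw [hp]; push_cast; ring
      have h3 : rcut ^ (-2 + 2 * κ) * rcut ^ ((1:ℝ) - 2 * κ) = rcut⁻¹ := by
        rw [← Real.rpow_add hrcut,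
          show (-2 + 2 * κ + ((1:ℝ) - 2 * κ)) = (-1 : ℝ) by ring,
          Real.rpow_neg_one]
      rw [h1, mul_pow, h2,
        show rcut ^ (-2 + 2 * κ) * (rcut ^ ((1:ℝ) - 2 * κ) * ‖f rcut‖ ^ 2)
          = (rcut ^ (-2 + 2 * κ) * rcut ^ ((1:ℝ) - 2 * κ)) * ‖f rcut‖ ^ 2 by ring, h3]
    -- combine
    have hc1 : (0:ℝ) ≤ 1 / (1 - κ) := by positivity
    have h4 : 1 / (1 - κ) * IB ≤ 1 / (1 - κ) * B := mul_le_mul_of_nonneg_left hIBle hc1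
    have h5 : (1 - κ) * IA ≤ φ rcut + 1 / (1 - κ) * B := by
      linarith only [hftc, hψle, hφR, h4]
    have h6 : IA ≤ (φ rcut + 1 / (1 - κ) * B) / (1 - κ) := by
      rw [le_div_iff₀ hκ']
      linarith only [h5]
    have h7 : (φ rcut + 1 / (1 - κ) * B) / (1 - κ)
        = 1 / (1 - κ) * rcut⁻¹ * ‖f rcut‖ ^ 2 + 1 / (1 - κ) ^ 2 * B := by
      rw [hφrcut]
      field_simp
    rw [h7] at h6
    rw [← hIAeq]
    exact h6
  -- pass to the limit over Ioc rcut (rcut + n)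
  by_cases hLint : IntegrableOn (fun r : ℝ => ‖f r‖ ^ 2 / r ^ 2) (Ioi rcut)
  · have hunion : ⋃ n : ℕ, Ioc rcut (rcut + (n:ℝ)) = Ioi rcut := by
      ext x
      simp only [mem_iUnion, mem_Ioc, mem_Ioi]
      constructor
      · rintro ⟨n, h1, _⟩; exact h1
      · intro hx
        refine ⟨⌈x - rcut⌉₊, hx, ?_⟩
        have := Nat.le_ceil (x - rcut)
        linarith
    have hmono : Monotone fun n : ℕ => Ioc rcut (rcut + (n:ℝ)) := by
      intro m n hmn
      apply Ioc_subset_Ioc le_rfl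
      have : (m:ℝ) ≤ (n:ℝ) := Nat.cast_le.2 hmn
      linarith
    have hLint' : IntegrableOn (fun r : ℝ => ‖f r‖ ^ 2 / r ^ 2)
        (⋃ n : ℕ, Ioc rcut (rcut + (n:ℝ))) := by
      rw [hunion]; exact hLint
    have htend : Tendsto (fun n : ℕ => ∫ r in Ioc rcut (rcut + (n:ℝ)), ‖f r‖ ^ 2 / r ^ 2)
        atTop (nhds (∫ r in Ioi rcut, ‖f r‖ ^ 2 / r ^ 2)) := by
      have h := tendsto_setIntegral_of_monotone (fun n : ℕ => measurableSet_Ioc) hmono hLint'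
      rwa [hunion] at h
    refine le_of_tendsto htend (Eventually.of_forall fun n => ?_)
    exact main (rcut + n) (le_add_of_nonneg_right (Nat.cast_nonneg n))
  · rw [integral_undef hLint]
    have hB0 : 0 ≤ B := by
      rw [hB]
      apply setIntegral_nonneg measurableSet_Ioi
      intro r hr
      exact mul_nonneg (Real.rpow_nonneg (le_of_lt (lt_trans hrcut hr)) _) (sq_nonneg _)
    have h1 : 0 ≤ 1 / (1 - κ) * rcut⁻¹ * ‖f rcut‖ ^ 2 := by positivity
    have h2 : 0 ≤ 1 / (1 - κ) ^ 2 * B := by positivity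
    linarith only [h1, h2]
end

section
/- Set p(r) := Δ_-(r)/(r²+a²). Let W:(r_+,∞)→ℝ be continuous with W ≥ 0, and let u:(r_+,∞)→ℂ be twice continuously differentiable and satisfy d/dr( p(r)·u'(r) ) = W(r)·u(r)/p(r) on (r_+,∞). If Re( p(r)·u'(r)·conj(u(r)) ) → 0 both as r→r_+⁺ and as r→∞, and u(r)→0 as r→∞, then u ≡ 0. -/
open Set Filter Topology ComplexConjugate

/-!
The flux `F = Re(p u' ū)` satisfies `F' = (W/p)|u|² + p|u'|² ≥ 0` by the radial equation, so `F` is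
monotone on `(r₊, ∞)`. Since it tends to `0` at both ends it vanishes identically, hence so does
`F'`; as `p > 0` this forces `u' = 0`, and a constant that tends to `0` at infinity is `0`.
Positivity of `p` comes from `Δ₋` being positive for large `r` with no root beyond `r₊`.
-/

noncomputable def radialFlux (p : ℝ → ℝ) (u : ℝ → ℂ) (r : ℝ) : ℝ :=
  p r * (deriv u r * conj (u r)).re

lemma hasDerivAt_radialFlux {p : ℝ → ℝ} {u : ℝ → ℂ} {g' : ℂ} {r : ℝ}
    (hg : HasDerivAt (fun s => (p s : ℂ) * deriv u s) g' r) (hu : DifferentiableAt ℝ u r) :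
    HasDerivAt (radialFlux p u) ((g' * conj (u r)).re + p r * Complex.normSq (deriv u r)) r := by
  have hflux : radialFlux p u = fun s => ((p s : ℂ) * deriv u s * conj (u s)).re := by
    ext s
    simp [radialFlux, mul_assoc]
  have h : HasDerivAt (fun s => ((p s : ℂ) * deriv u s * conj (u s)).re)
      (g' * conj (u r) + p r * deriv u r * conj (deriv u r)).re r :=
    Complex.reCLM.hasFDerivAt.comp_hasDerivAt r (hg.mul hu.hasDerivAt.star)
  rw [hflux]
  convert h using 1
  simp [mul_assoc, Complex.mul_conj]

lemma eqOn_zero_of_monotoneOn_of_tendsto {a : ℝ} {F : ℝ → ℝ} (hF : MonotoneOn F (Ioi a))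
    (hleft : Tendsto F (𝓝[>] a) (𝓝 0)) (htop : Tendsto F atTop (𝓝 0)) :
    EqOn F 0 (Ioi a) := by
  intro r hr
  apply le_antisymm
  · refine ge_of_tendsto htop ?_
    filter_upwards [eventually_ge_atTop r] with s hs
    exact hF hr (hr.trans_le hs) hs
  · refine le_of_tendsto hleft ?_
    filter_upwards [Ioo_mem_nhdsGT hr] with s hs
    exact hF hs.1 hr hs.2.le

lemma eqOn_zero_of_deriv_eqOn_zero_of_tendsto {E : Type*} [NormedAddCommGroup E]
    [NormedSpace ℝ E] {a : ℝ} {u : ℝ → E} (hu : DifferentiableOn ℝ u (Ioi a))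
    (hu' : EqOn (deriv u) 0 (Ioi a)) (htop : Tendsto u atTop (𝓝 0)) : EqOn u 0 (Ioi a) := by
  intro r hr
  have hconst : ∀ᶠ s in atTop, u r = u s := by
    filter_upwards [eventually_gt_atTop a] with s hs
    exact isOpen_Ioi.is_const_of_deriv_eq_zero isPreconnected_Ioi hu hu' hr hs
  exact tendsto_nhds_unique (tendsto_const_nhds.congr' hconst) htop

lemma pos_of_eventually_pos_of_le_of_eq_zero {f : ℝ → ℝ} {b : ℝ} (hf : Continuous f)
    (htop : ∀ᶠ x in atTop, 0 < f x) (hroot : ∀ x, f x = 0 → x ≤ b) {x : ℝ} (hx : b < x) :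
    0 < f x := by
  obtain ⟨y, hy, hxy⟩ := (htop.and (eventually_gt_atTop x)).exists
  by_contra! hneg
  obtain ⟨c, hc, hc0⟩ := intermediate_value_Icc hxy.le hf.continuousOn ⟨hneg, hy.le⟩
  linarith [hroot c hc0, hc.1]

theorem eqOn_zero_of_tendsto_radialFlux {a : ℝ} {p W : ℝ → ℝ} {u : ℝ → ℂ}
    (hp : ∀ r ∈ Ioi a, 0 < p r) (hp_diff : DifferentiableOn ℝ p (Ioi a))
    (hW : ∀ r ∈ Ioi a, 0 ≤ W r) (hu : ContDiffOn ℝ 2 u (Ioi a))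
    (hODE : ∀ r ∈ Ioi a,
      deriv (fun s : ℝ => (p s : ℂ) * deriv u s) r = ((W r / p r : ℝ) : ℂ) * u r)
    (hleft : Tendsto (radialFlux p u) (𝓝[>] a) (𝓝 0))
    (htop : Tendsto (radialFlux p u) atTop (𝓝 0))
    (hdecay : Tendsto u atTop (𝓝 0)) : EqOn u 0 (Ioi a) := by
  have hu_diff : DifferentiableOn ℝ u (Ioi a) := hu.differentiableOn (by norm_num)
  have hu'_diff : DifferentiableOn ℝ (deriv u) (Ioi a) :=
    (hu.deriv_of_isOpen (m := 1) isOpen_Ioi (by norm_num)).differentiableOn one_ne_zero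
  have hpot_nonneg : ∀ r ∈ Ioi a, 0 ≤ W r / p r * Complex.normSq (u r) := fun r hr =>
    mul_nonneg (div_nonneg (hW r hr) (hp r hr).le) (Complex.normSq_nonneg _)
  have hkin_nonneg : ∀ r ∈ Ioi a, 0 ≤ p r * Complex.normSq (deriv u r) := fun r hr =>
    mul_nonneg (hp r hr).le (Complex.normSq_nonneg _)
  set Q : ℝ → ℝ := fun r => W r / p r * Complex.normSq (u r) + p r * Complex.normSq (deriv u r)
  have hflux' : ∀ r ∈ Ioi a, HasDerivAt (radialFlux p u) (Q r) r := by
    intro r hr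
    have hmem := isOpen_Ioi.mem_nhds hr
    have hg : HasDerivAt (fun s => (p s : ℂ) * deriv u s) (((W r / p r : ℝ) : ℂ) * u r) r := by
      rw [← hODE r hr]
      exact ((hp_diff.differentiableAt hmem).hasDerivAt.ofReal_comp.differentiableAt.mul
        (hu'_diff.differentiableAt hmem)).hasDerivAt
    convert hasDerivAt_radialFlux hg (hu_diff.differentiableAt hmem) using 2
    simp [mul_assoc, Complex.mul_conj]
  have hmono : MonotoneOn (radialFlux p u) (Ioi a) := by
    refine monotoneOn_of_hasDerivWithinAt_nonneg (f' := Q) (convex_Ioi a)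
      (fun r hr => (hflux' r hr).continuousAt.continuousWithinAt) ?_ ?_ <;> rw [interior_Ioi]
    · exact fun r hr => (hflux' r hr).hasDerivWithinAt
    · exact fun r hr => add_nonneg (hpot_nonneg r hr) (hkin_nonneg r hr)
  have hflux_zero := eqOn_zero_of_monotoneOn_of_tendsto hmono hleft htop
  have hu'_zero : EqOn (deriv u) 0 (Ioi a) := by
    intro r hr
    have hsum : Q r = 0 :=
      (hflux' r hr).unique <| (hasDerivAt_const r 0).congr_of_eventuallyEq <|
        eventually_of_mem (isOpen_Ioi.mem_nhds hr) hflux_zero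
    have hkin := ((add_eq_zero_iff_of_nonneg (hpot_nonneg r hr) (hkin_nonneg r hr)).1 hsum).2
    simpa [(hp r hr).ne'] using hkin
  exact eqOn_zero_of_deriv_eqOn_zero_of_tendsto hu_diff hu'_zero hdecay

lemma eventually_pos_kerrDelta (ℓ M a : ℝ) :
    ∀ᶠ r in atTop, 0 < (r ^ 2 + a ^ 2) * (1 + r ^ 2 / ℓ ^ 2) - 2 * M * r := by
  filter_upwards [eventually_gt_atTop (max 0 (2 * M))] with r hr
  have hr0 : 0 < r := (le_max_left _ _).trans_lt hr
  have hrM : 2 * M < r := (le_max_right _ _).trans_lt hr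
  have hgrowth : r ^ 2 ≤ (r ^ 2 + a ^ 2) * (1 + r ^ 2 / ℓ ^ 2) := by
    nlinarith [sq_nonneg a, mul_nonneg (add_nonneg (sq_nonneg r) (sq_nonneg a))
      (div_nonneg (sq_nonneg r) (sq_nonneg ℓ))]
  nlinarith

lemma sq_add_sq_pos_of_kerrDelta_pos {ℓ M a r : ℝ}
    (h : 0 < (r ^ 2 + a ^ 2) * (1 + r ^ 2 / ℓ ^ 2) - 2 * M * r) : 0 < r ^ 2 + a ^ 2 := by
  by_contra! hle
  have hr : r = 0 := by nlinarith [sq_nonneg r, sq_nonneg a]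
  have ha : a ^ 2 = 0 := by nlinarith [sq_nonneg a]
  simp [hr, ha] at h

theorem stmt_16_general (ℓ M a rp : ℝ)
    (Δ : ℝ → ℝ) (hΔ : ∀ r, Δ r = (r ^ 2 + a ^ 2) * (1 + r ^ 2 / ℓ ^ 2) - 2 * M * r)
    (hmax : ∀ r, Δ r = 0 → r ≤ rp)
    (p : ℝ → ℝ) (hp : ∀ r, p r = Δ r / (r ^ 2 + a ^ 2))
    (W : ℝ → ℝ) (hW : ∀ r ∈ Ioi rp, 0 ≤ W r)
    (u : ℝ → ℂ) (hu : ContDiffOn ℝ 2 u (Ioi rp))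
    (hODE : ∀ r ∈ Ioi rp,
      deriv (fun s : ℝ => ((p s : ℝ) : ℂ) * deriv u s) r = ((W r / p r : ℝ) : ℂ) * u r)
    (hfluxH : Tendsto (fun r : ℝ => p r * (deriv u r * (starRingEnd ℂ) (u r)).re)
      (nhdsWithin rp (Ioi rp)) (nhds 0))
    (hfluxI : Tendsto (fun r : ℝ => p r * (deriv u r * (starRingEnd ℂ) (u r)).re)
      atTop (nhds 0))
    (hdecay : Tendsto u atTop (nhds 0)) :
    ∀ r ∈ Ioi rp, u r = 0 := by
  have hΔ_eq : Δ = fun r => (r ^ 2 + a ^ 2) * (1 + r ^ 2 / ℓ ^ 2) - 2 * M * r := funext hΔ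
  have hΔ_pos : ∀ r ∈ Ioi rp, 0 < Δ r := fun r hr =>
    pos_of_eventually_pos_of_le_of_eq_zero (by rw [hΔ_eq]; fun_prop)
      (by simpa only [hΔ_eq] using eventually_pos_kerrDelta ℓ M a) hmax hr
  have hden : ∀ r ∈ Ioi rp, 0 < r ^ 2 + a ^ 2 := fun r hr =>
    sq_add_sq_pos_of_kerrDelta_pos (ℓ := ℓ) (M := M) (by rw [← hΔ]; exact hΔ_pos r hr)
  refine eqOn_zero_of_tendsto_radialFlux (fun r hr => ?_) (fun r hr => ?_) hW hu hODE
    hfluxH hfluxI hdecay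
  · rw [hp]
    exact div_pos (hΔ_pos r hr) (hden r hr)
  · rw [funext hp, hΔ_eq]
    exact DifferentiableAt.differentiableWithinAt
      (.div (by fun_prop) (by fun_prop) (hden r hr).ne')

theorem stmt_16 (ℓ M a rp : ℝ) (hℓ : 0 < ℓ) (hM : 0 < M) (ha : |a| < ℓ) (hrp : 0 < rp)
    (Δ : ℝ → ℝ) (hΔ : ∀ r, Δ r = (r ^ 2 + a ^ 2) * (1 + r ^ 2 / ℓ ^ 2) - 2 * M * r)
    (hroot : Δ rp = 0) (hmax : ∀ r, Δ r = 0 → r ≤ rp) (hd : 0 < deriv Δ rp)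
    (p : ℝ → ℝ) (hp : ∀ r, p r = Δ r / (r ^ 2 + a ^ 2))
    (W : ℝ → ℝ) (hWcont : ContinuousOn W (Ioi rp)) (hW : ∀ r ∈ Ioi rp, 0 ≤ W r)
    (u : ℝ → ℂ) (hu : ContDiffOn ℝ 2 u (Ioi rp))
    (hODE : ∀ r ∈ Ioi rp,
      deriv (fun s : ℝ => ((p s : ℝ) : ℂ) * deriv u s) r = ((W r / p r : ℝ) : ℂ) * u r)
    (hfluxH : Tendsto (fun r : ℝ => p r * (deriv u r * (starRingEnd ℂ) (u r)).re)
      (nhdsWithin rp (Ioi rp)) (nhds 0))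
    (hfluxI : Tendsto (fun r : ℝ => p r * (deriv u r * (starRingEnd ℂ) (u r)).re)
      atTop (nhds 0))
    (hdecay : Tendsto u atTop (nhds 0)) :
    ∀ r ∈ Ioi rp, u r = 0 :=
  stmt_16_general ℓ M a rp Δ hΔ hmax p hp W hW u hu hODE hfluxH hfluxI hdecay
end

section
/- Let m∈ℤ, ω∈ℝ, α∈ℝ and λ∈ℝ, let V be the radial potential built from (m, ω, α, λ), set ξ := i(Ξam − (r_+²+a²)ω)/Δ_-'(r_+) and p(r) := Δ_-(r)/(r²+a²). Suppose u(r) = exp( ξ·log(r−r_+) )·ρ(r) on (r_+,∞), where ρ:[r_+,∞)→ℂ is continuously differentiable with ρ(r_+) ≠ 0, that u solves p(r)·d/dr( p(r)·u'(r) ) + (ω² − V(r))·u(r) = 0 on (r_+,∞), and that Im( p(r)·u'(r)·conj(u(r)) ) → 0 as r→∞. Then Ξam = (r_+²+a²)ω, that is, ω = ω_+. -/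
/-!
The flux `H r = p r * Im (u' r * conj (u r))` is the Wronskian of `u` and `conj u`, so it is
conserved: wherever `ω² ≠ V` the equation makes `p u'` differentiable with
`(p u')' = (V - ω²) u / p`, and then `H' = Im ((V - ω²) |u|² / p + p |u'|²) = 0`; at a zero of `u`
one gets `H' = 0` from the continuity of `p u'` alone. The remaining points are zeros of the
analytic function `ω² - V`, which does not vanish at `r_+`, so they are countable and `H` is
constant on `(r_+, ∞)`.
Near the horizon `u = (r - r_+)^ξ ρ` with `ξ` purely imaginary, so `|u| = |ρ|` and
`H → Im ξ · Δ'(r_+) / (r_+² + a²) · |ρ(r_+)|²`, which vanishes only if `Ξam = (r_+² + a²)ω`;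
at infinity `H → 0` by assumption.
-/

open Set Filter Topology ComplexConjugate

theorem hasDerivAt_mul_of_continuousAt_of_eq_zero {𝕜 𝔸 : Type*} [NontriviallyNormedField 𝕜]
    [NormedRing 𝔸] [NormedAlgebra 𝕜 𝔸] {f g : 𝕜 → 𝔸} {g' : 𝔸} {x : 𝕜}
    (hf : ContinuousAt f x) (hg : HasDerivAt g g' x) (hgx : g x = 0) :
    HasDerivAt (fun s => f s * g s) (f x * g') x := by
  rw [hasDerivAt_iff_tendsto_slope] at hg ⊢
  refine ((hf.tendsto.mono_left nhdsWithin_le_nhds).mul hg).congr fun s => ?_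
  simp only [slope_def_module, hgx, mul_zero, sub_zero, mul_smul_comm]

theorem hasDerivAt_im_mul_conj_of_ode {p q : ℝ → ℝ} {u : ℝ → ℂ} {x : ℝ}
    (hu : DifferentiableAt ℝ u x) (hg : ContinuousAt (fun s => (p s : ℂ) * deriv u s) x)
    (hpx : p x ≠ 0) (hqx : q x ≠ 0)
    (hode : (p x : ℂ) * deriv (fun s => (p s : ℂ) * deriv u s) x + q x * u x = 0) :
    HasDerivAt (fun s => ((p s : ℂ) * deriv u s * conj (u s)).im) 0 x := by
  set g := fun s => (p s : ℂ) * deriv u s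
  have hconj : HasDerivAt (fun s => conj (u s)) (conj (deriv u x)) x := hu.hasDerivAt.star
  suffices h : ∃ w : ℂ, w.im = 0 ∧ HasDerivAt (fun s => g s * conj (u s)) w x by
    obtain ⟨w, hw, h⟩ := h
    exact (Complex.imCLM.hasFDerivAt.comp_hasDerivAt x h).congr_deriv (by simp [hw])
  by_cases hux : u x = 0
  · refine ⟨_, ?_, hasDerivAt_mul_of_continuousAt_of_eq_zero hg hconj (by simp [hux])⟩
    simp [g, mul_assoc, Complex.mul_conj]
  · -- `deriv g x` read off the equation is nonzero, hence not a junk value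
    have hgx : deriv g x = (-(q x / p x) : ℝ) * u x := by
      have hpx' : (p x : ℂ) ≠ 0 := by exact_mod_cast hpx
      apply mul_left_cancel₀ hpx'
      push_cast
      field_simp
      linear_combination hode
    have hg' : HasDerivAt g (deriv g x) x := by
      refine (differentiableAt_of_deriv_ne_zero ?_).hasDerivAt
      rw [hgx]
      exact mul_ne_zero (by exact_mod_cast neg_ne_zero.mpr (div_ne_zero hqx hpx)) hux
    refine ⟨_, ?_, hg'.mul hconj⟩
    rw [hgx]
    simp [g, mul_assoc, Complex.mul_conj]

theorem Set.OrdConnected.eq_of_hasDerivAt_zero_off_countable {E : Type*} [NormedAddCommGroup E]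
    [NormedSpace ℝ E] [CompleteSpace E] {f : ℝ → E} {U s : Set ℝ} (hU : U.OrdConnected)
    (hs : s.Countable) (hf : ContinuousOn f U) (hf' : ∀ x ∈ U \ s, HasDerivAt f 0 x)
    {a b : ℝ} (ha : a ∈ U) (hb : b ∈ U) : f a = f b := by
  have hab := hU.uIcc_subset ha hb
  have h := MeasureTheory.integral_eq_of_hasDerivAt_off_countable f (fun _ => 0) hs
    (hf.mono hab) (fun x hx => hf' x ⟨hab (Ioo_subset_Icc_self hx.1), hx.2⟩)
    intervalIntegrable_const
  rw [intervalIntegral.integral_zero, eq_comm, sub_eq_zero] at h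
  exact h.symm

theorem AnalyticOnNhd.countable_inter_preimage_zero {E : Type*} [NormedAddCommGroup E]
    [NormedSpace ℝ E] {f : ℝ → E} {U : Set ℝ} (hf : AnalyticOnNhd ℝ f U) (hU : IsPreconnected U)
    {x₀ : ℝ} (hx₀ : x₀ ∈ U) (hfx₀ : f x₀ ≠ 0) : (U ∩ f ⁻¹' {0}).Countable := by
  rcases hf.eqOn_zero_or_eventually_ne_zero_of_preconnected hU with h | h
  · exact absurd (h hx₀) hfx₀
  refine (countable_setOfPred_isolated_right_within (s := U ∩ f ⁻¹' {0})).mono fun x hx => ?_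
  refine ⟨hx, ?_⟩
  have hdisj : Disjoint (𝓝[≠] x) (𝓟 (U ∩ f ⁻¹' {0})) := by
    have hset : U \ {y | f y ≠ 0} = U ∩ f ⁻¹' {0} := by ext; simp
    exact hset ▸ mem_codiscreteWithin.mp h x hx.1
  rw [inter_comm, nhdsWithin_inter', ← le_bot_iff]
  exact (inf_le_inf_right _ (nhdsWithin_mono x fun y hy => ne_of_gt hy)).trans
    hdisj.eq_bot.le

theorem flux_eq_of_ode {p q : ℝ → ℝ} {u : ℝ → ℂ} {U : Set ℝ} (hU : IsOpen U)
    (hU' : U.OrdConnected) (hu : DifferentiableOn ℝ u U) (hu' : ContinuousOn (deriv u) U)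
    (hp : ContinuousOn p U) (hp0 : ∀ x ∈ U, p x ≠ 0) (hq : (U ∩ q ⁻¹' {0}).Countable)
    (hode : ∀ x ∈ U, (p x : ℂ) * deriv (fun s => (p s : ℂ) * deriv u s) x + q x * u x = 0)
    {a b : ℝ} (ha : a ∈ U) (hb : b ∈ U) :
    p a * (deriv u a * conj (u a)).im = p b * (deriv u b * conj (u b)).im := by
  simp only [← Complex.im_ofReal_mul, ← mul_assoc]
  have hg : ContinuousOn (fun s => (p s : ℂ) * deriv u s) U :=
    (Complex.continuous_ofReal.comp_continuousOn hp).mul hu'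
  refine hU'.eq_of_hasDerivAt_zero_off_countable
    (f := fun s => ((p s : ℂ) * deriv u s * conj (u s)).im) hq ?_ (fun x hx => ?_) ha hb
  · exact Complex.continuous_im.comp_continuousOn (hg.mul (hu.continuousOn.star))
  · have hxU : U ∈ 𝓝 x := hU.mem_nhds hx.1
    exact hasDerivAt_im_mul_conj_of_ode (hu.differentiableAt hxU) (hg.continuousAt hxU)
      (hp0 x hx.1) (fun h => hx.2 ⟨hx.1, h⟩) (hode x hx.1)

section Horizon

variable {ξ : ℂ} {rp : ℝ}

theorem hasDerivAt_cexp_mul_log_sub {r : ℝ} (hr : rp < r) :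
    HasDerivAt (fun s : ℝ => Complex.exp (ξ * Complex.log ((s - rp : ℝ) : ℂ)))
      (Complex.exp (ξ * Complex.log ((r - rp : ℝ) : ℂ)) * (ξ / ((r - rp : ℝ) : ℂ))) r := by
  have hlog := ((hasDerivAt_id r).sub_const rp).ofReal_comp.clog_real
    (Complex.ofReal_mem_slitPlane.mpr (sub_pos.mpr hr))
  simpa [div_eq_mul_inv] using (hlog.const_mul ξ).cexp

theorem conj_mul_self_cexp_mul_log_ofReal (hξ : ξ.re = 0) {t : ℝ} (ht : 0 ≤ t) :
    conj (Complex.exp (ξ * Complex.log t)) * Complex.exp (ξ * Complex.log t) = 1 := by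
  have hre : (ξ * Complex.log t).re = 0 := by
    simp [Complex.mul_re, hξ, Complex.log_im, Complex.arg_ofReal_of_nonneg ht]
  rw [← Complex.exp_conj, ← Complex.exp_add, add_comm, Complex.add_conj, hre]
  simp

theorem hasDerivAt_of_eq_cexp_mul_log_mul {ρ u : ℝ → ℂ}
    (hu : ∀ r ∈ Ioi rp, u r = Complex.exp (ξ * Complex.log ((r - rp : ℝ) : ℂ)) * ρ r)
    (hρ : ContDiffOn ℝ 1 ρ (Ici rp)) {r : ℝ} (hr : rp < r) :
    HasDerivAt u (Complex.exp (ξ * Complex.log ((r - rp : ℝ) : ℂ))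
      * (ξ / ((r - rp : ℝ) : ℂ) * ρ r + derivWithin ρ (Ici rp) r)) r := by
  have hIci : Ici rp ∈ 𝓝 r := Ici_mem_nhds hr
  have hρr : HasDerivAt ρ (derivWithin ρ (Ici rp) r) r := by
    rw [derivWithin_of_mem_nhds hIci]
    exact ((hρ.differentiableOn one_ne_zero) r hr.le).differentiableAt hIci |>.hasDerivAt
  refine (((hasDerivAt_cexp_mul_log_sub (ξ := ξ) hr).mul hρr).congr_deriv (by ring))
    |>.congr_of_eventuallyEq ?_
  filter_upwards [Ioi_mem_nhds hr] with s hs using hu s hs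

theorem continuousOn_deriv_of_eq_cexp_mul_log_mul {ρ u : ℝ → ℂ}
    (hu : ∀ r ∈ Ioi rp, u r = Complex.exp (ξ * Complex.log ((r - rp : ℝ) : ℂ)) * ρ r)
    (hρ : ContDiffOn ℝ 1 ρ (Ici rp)) : ContinuousOn (deriv u) (Ioi rp) := by
  have hE : ContinuousOn (fun s : ℝ => Complex.exp (ξ * Complex.log ((s - rp : ℝ) : ℂ)))
      (Ioi rp) :=
    fun r hr => (hasDerivAt_cexp_mul_log_sub (ξ := ξ) hr).continuousAt.continuousWithinAt
  have hinv : ContinuousOn (fun s : ℝ => ξ / ((s - rp : ℝ) : ℂ)) (Ioi rp) :=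
    continuousOn_const.div (by fun_prop) fun s hs => by exact_mod_cast (sub_pos.mpr hs).ne'
  have hρ' := (hρ.continuousOn_derivWithin (uniqueDiffOn_Ici rp) le_rfl).mono Ioi_subset_Ici_self
  refine (hE.mul ((hinv.mul (hρ.continuousOn.mono Ioi_subset_Ici_self)).add hρ')).congr
    fun r hr => (hasDerivAt_of_eq_cexp_mul_log_mul hu hρ hr).deriv

theorem im_deriv_mul_conj_of_eq_cexp_mul_log_mul (hξ : ξ.re = 0) {ρ u : ℝ → ℂ}
    (hu : ∀ r ∈ Ioi rp, u r = Complex.exp (ξ * Complex.log ((r - rp : ℝ) : ℂ)) * ρ r)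
    (hρ : ContDiffOn ℝ 1 ρ (Ici rp)) {r : ℝ} (hr : rp < r) :
    (deriv u r * conj (u r)).im
      = ξ.im / (r - rp) * Complex.normSq (ρ r) + (derivWithin ρ (Ici rp) r * conj (ρ r)).im := by
  set E := Complex.exp (ξ * Complex.log ((r - rp : ℝ) : ℂ))
  have hE : conj E * E = 1 := conj_mul_self_cexp_mul_log_ofReal hξ (sub_pos.mpr hr).le
  rw [(hasDerivAt_of_eq_cexp_mul_log_mul hu hρ hr).deriv, hu r hr, map_mul]
  calc (E * (ξ / ((r - rp : ℝ) : ℂ) * ρ r + derivWithin ρ (Ici rp) r)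
        * (conj E * conj (ρ r))).im
      = (conj E * E * (ξ / ((r - rp : ℝ) : ℂ) * (ρ r * conj (ρ r))
          + derivWithin ρ (Ici rp) r * conj (ρ r))).im := by ring_nf
    _ = _ := by
      rw [hE, one_mul, Complex.mul_conj, Complex.add_im, Complex.im_mul_ofReal,
        Complex.div_ofReal_im]

theorem tendsto_flux_nhdsGT (hξ : ξ.re = 0) {ρ u : ℝ → ℂ}
    (hu : ∀ r ∈ Ioi rp, u r = Complex.exp (ξ * Complex.log ((r - rp : ℝ) : ℂ)) * ρ r)
    (hρ : ContDiffOn ℝ 1 ρ (Ici rp)) {p : ℝ → ℝ} {P : ℝ} (hp : HasDerivAt p P rp)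
    (hp0 : p rp = 0) :
    Tendsto (fun r => p r * (deriv u r * conj (u r)).im) (𝓝[>] rp)
      (𝓝 (P * (ξ.im * Complex.normSq (ρ rp)))) := by
  have hslope : Tendsto (fun r => p r / (r - rp)) (𝓝[>] rp) (𝓝 P) := by
    refine ((hasDerivAt_iff_tendsto_slope.mp hp).mono_left
      (nhdsWithin_mono _ fun r hr => ne_of_gt hr)).congr fun r => ?_
    rw [slope_def_field, hp0, sub_zero]
  have hρc : ContinuousWithinAt ρ (Ici rp) rp := hρ.continuousOn rp self_mem_Ici
  have hρ'c : ContinuousWithinAt (derivWithin ρ (Ici rp)) (Ici rp) rp :=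
    hρ.continuousOn_derivWithin (uniqueDiffOn_Ici rp) le_rfl rp self_mem_Ici
  have hrest : ContinuousWithinAt (fun r => ξ.im * Complex.normSq (ρ r)
      + (r - rp) * (derivWithin ρ (Ici rp) r * conj (ρ r)).im) (Ici rp) rp := by
    fun_prop
  have hlim := hslope.mul ((hrest.mono Ioi_subset_Ici_self).tendsto)
  rw [sub_self, zero_mul, add_zero] at hlim
  refine hlim.congr' ?_
  filter_upwards [self_mem_nhdsWithin] with r hr
  rw [im_deriv_mul_conj_of_eq_cexp_mul_log_mul hξ hu hρ hr]
  field_simp [(sub_pos.mpr (mem_Ioi.mp hr)).ne']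

theorem flux_horizon_eq_zero (hξ : ξ.re = 0) {P : ℝ} {p q : ℝ → ℝ} {ρ u : ℝ → ℂ}
    (hp : HasDerivAt p P rp) (hp0 : p rp = 0) (hp_cont : ContinuousOn p (Ioi rp))
    (hp_ne : ∀ r ∈ Ioi rp, p r ≠ 0) (hq : AnalyticOnNhd ℝ q (Ici rp)) (hq0 : q rp ≠ 0)
    (hρ : ContDiffOn ℝ 1 ρ (Ici rp))
    (hu : ∀ r ∈ Ioi rp, u r = Complex.exp (ξ * Complex.log ((r - rp : ℝ) : ℂ)) * ρ r)
    (hode : ∀ r ∈ Ioi rp,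
      (p r : ℂ) * deriv (fun s => (p s : ℂ) * deriv u s) r + q r * u r = 0)
    (hflux : Tendsto (fun r => p r * (deriv u r * conj (u r)).im) atTop (𝓝 0)) :
    P * (ξ.im * Complex.normSq (ρ rp)) = 0 := by
  set H := fun r => p r * (deriv u r * conj (u r)).im
  have hcount : (Ioi rp ∩ q ⁻¹' {0}).Countable :=
    (hq.countable_inter_preimage_zero isPreconnected_Ici self_mem_Ici hq0).mono
      (inter_subset_inter_left _ Ioi_subset_Ici_self)
  have hu_diff : DifferentiableOn ℝ u (Ioi rp) := fun r hr =>
    (hasDerivAt_of_eq_cexp_mul_log_mul hu hρ hr).differentiableAt.differentiableWithinAt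
  have hconst : ∀ r ∈ Ioi rp, H r = H (rp + 1) := fun r hr =>
    flux_eq_of_ode isOpen_Ioi ordConnected_Ioi hu_diff
      (continuousOn_deriv_of_eq_cexp_mul_log_mul hu hρ) hp_cont hp_ne hcount hode hr
      (by simp)
  have h_horizon : H (rp + 1) = P * (ξ.im * Complex.normSq (ρ rp)) :=
    tendsto_nhds_unique (tendsto_const_nhds.congr' (eventually_nhdsWithin_of_forall
      fun r hr => (hconst r hr).symm)) (tendsto_flux_nhdsGT hξ hu hρ hp hp0)
  have h_infinity : H (rp + 1) = 0 :=
    tendsto_nhds_unique (tendsto_const_nhds.congr' (eventually_gt_atTop rp |>.mono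
      fun r hr => (hconst r hr).symm)) hflux
  rw [← h_horizon, h_infinity]

end Horizon

theorem stmt_17_general (ℓ M a rp : ℝ) (hrp : 0 < rp)
    (Δ : ℝ → ℝ) (hΔ : ∀ r, Δ r = (r ^ 2 + a ^ 2) * (1 + r ^ 2 / ℓ ^ 2) - 2 * M * r)
    (hroot : Δ rp = 0) (hmax : ∀ r, Δ r = 0 → r ≤ rp) (hd : 0 < deriv Δ rp)
    (Ξ : ℝ)
    (m : ℤ) (ω α lam : ℝ)
    (ξ : ℂ) (hξ : ξ = Complex.I * ((Ξ * a * (m : ℝ) - (rp ^ 2 + a ^ 2) * ω : ℝ) : ℂ)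
      / ((deriv Δ rp : ℝ) : ℂ))
    (p : ℝ → ℝ) (hp : ∀ r, p r = Δ r / (r ^ 2 + a ^ 2))
    (V : ℝ → ℝ) (hV : ∀ r, V r =
      ((-3) * r ^ 2 * (Δ r) ^ 2 / (r ^ 2 + a ^ 2) ^ 4
        + Δ r * (5 * r ^ 4 / ℓ ^ 2 + 3 * r ^ 2 * (1 + a ^ 2 / ℓ ^ 2) - 4 * M * r + a ^ 2)
          / (r ^ 2 + a ^ 2) ^ 3)
      + ((Δ r * (lam + ω ^ 2 * a ^ 2) - Ξ ^ 2 * a ^ 2 * (m : ℝ) ^ 2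
          - 2 * (m : ℝ) * ω * a * Ξ * (Δ r - (r ^ 2 + a ^ 2))) / (r ^ 2 + a ^ 2) ^ 2)
      + (-(α / ℓ ^ 2) * Δ r * (r ^ 2 + (if 0 < α then 1 else 0) * a ^ 2)
          / (r ^ 2 + a ^ 2) ^ 2))
    (ρ : ℝ → ℂ) (hρ : ContDiffOn ℝ 1 ρ (Ici rp)) (hρ0 : ρ rp ≠ 0)
    (u : ℝ → ℂ)
    (hureg : ∀ r ∈ Ioi rp, u r = Complex.exp (ξ * Complex.log ((r - rp : ℝ) : ℂ)) * ρ r)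
    (hODE : ∀ r ∈ Ioi rp,
      ((p r : ℝ) : ℂ) * deriv (fun s : ℝ => ((p s : ℝ) : ℂ) * deriv u s) r
        + (((ω ^ 2 - V r : ℝ)) : ℂ) * u r = 0)
    (hflux : Tendsto (fun r : ℝ => p r * (deriv u r * (starRingEnd ℂ) (u r)).im)
      atTop (nhds 0)) :
    Ξ * a * (m : ℝ) = (rp ^ 2 + a ^ 2) * ω := by
  by_contra hne
  set c := Ξ * a * (m : ℝ) - (rp ^ 2 + a ^ 2) * ω
  have hc : c ≠ 0 := sub_ne_zero.mpr hne
  set d := deriv Δ rp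
  have hξ' : ξ = (c / d : ℝ) * Complex.I := by rw [hξ]; push_cast; ring
  have hsq : ∀ r, rp ≤ r → 0 < r ^ 2 + a ^ 2 := fun r hr => by nlinarith [sq_nonneg a]
  have hΔd : HasDerivAt Δ d rp := (differentiableAt_of_deriv_ne_zero hd.ne').hasDerivAt
  have hpeq : p = fun r => Δ r / (r ^ 2 + a ^ 2) := funext hp
  have hp_deriv : HasDerivAt p (d / (rp ^ 2 + a ^ 2)) rp := by
    rw [hpeq]
    refine (hΔd.div ((hasDerivAt_pow 2 rp).add_const (a ^ 2)) (hsq rp le_rfl).ne').congr_deriv ?_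
    rw [hroot]; field_simp; ring
  have hp_rp : p rp = 0 := by rw [hp, hroot, zero_div]
  have hp_cont : ContinuousOn p (Ioi rp) := by
    rw [hpeq, funext hΔ]
    exact continuousOn_of_forall_continuousAt fun r hr => by
      have := (hsq r (le_of_lt hr)).ne'
      fun_prop (disch := assumption)
  have hp_ne : ∀ r ∈ Ioi rp, p r ≠ 0 := fun r hr =>
    hp r ▸ div_ne_zero (fun h => (hmax r h).not_gt hr) (hsq r (le_of_lt hr)).ne'
  have hq_an : AnalyticOnNhd ℝ (fun r => ω ^ 2 - V r) (Ici rp) := fun r hr => by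
    have := (hsq r hr).ne'
    simp only [hV, hΔ]
    fun_prop (disch := first | assumption | exact pow_ne_zero _ this)
  have hq_rp : ω ^ 2 - V rp ≠ 0 := by
    have : ω ^ 2 - V rp = c ^ 2 / (rp ^ 2 + a ^ 2) ^ 2 := by
      rw [hV, hroot]; field_simp; ring
    rw [this]
    exact div_ne_zero (pow_ne_zero _ hc) (pow_ne_zero _ (hsq rp le_rfl).ne')
  have h_horizon := flux_horizon_eq_zero (by simp [hξ']) hp_deriv hp_rp hp_cont hp_ne hq_an hq_rp
    hρ hureg hODE hflux
  have hξim : ξ.im = c / d := by simp [hξ']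
  simp [hξim, hd.ne', (hsq rp le_rfl).ne', hc, hρ0] at h_horizon

theorem stmt_17 (ℓ M a rp : ℝ) (hℓ : 0 < ℓ) (hM : 0 < M) (ha : |a| < ℓ) (hrp : 0 < rp)
    (Δ : ℝ → ℝ) (hΔ : ∀ r, Δ r = (r ^ 2 + a ^ 2) * (1 + r ^ 2 / ℓ ^ 2) - 2 * M * r)
    (hroot : Δ rp = 0) (hmax : ∀ r, Δ r = 0 → r ≤ rp) (hd : 0 < deriv Δ rp)
    (Ξ : ℝ) (hΞ : Ξ = 1 - a ^ 2 / ℓ ^ 2)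
    (m : ℤ) (ω α lam : ℝ)
    (ξ : ℂ) (hξ : ξ = Complex.I * ((Ξ * a * (m : ℝ) - (rp ^ 2 + a ^ 2) * ω : ℝ) : ℂ)
      / ((deriv Δ rp : ℝ) : ℂ))
    (p : ℝ → ℝ) (hp : ∀ r, p r = Δ r / (r ^ 2 + a ^ 2))
    (V : ℝ → ℝ) (hV : ∀ r, V r =
      ((-3) * r ^ 2 * (Δ r) ^ 2 / (r ^ 2 + a ^ 2) ^ 4
        + Δ r * (5 * r ^ 4 / ℓ ^ 2 + 3 * r ^ 2 * (1 + a ^ 2 / ℓ ^ 2) - 4 * M * r + a ^ 2)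
          / (r ^ 2 + a ^ 2) ^ 3)
      + ((Δ r * (lam + ω ^ 2 * a ^ 2) - Ξ ^ 2 * a ^ 2 * (m : ℝ) ^ 2
          - 2 * (m : ℝ) * ω * a * Ξ * (Δ r - (r ^ 2 + a ^ 2))) / (r ^ 2 + a ^ 2) ^ 2)
      + (-(α / ℓ ^ 2) * Δ r * (r ^ 2 + (if 0 < α then 1 else 0) * a ^ 2)
          / (r ^ 2 + a ^ 2) ^ 2))
    (ρ : ℝ → ℂ) (hρ : ContDiffOn ℝ 1 ρ (Ici rp)) (hρ0 : ρ rp ≠ 0)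
    (u : ℝ → ℂ)
    (hureg : ∀ r ∈ Ioi rp, u r = Complex.exp (ξ * Complex.log ((r - rp : ℝ) : ℂ)) * ρ r)
    (hODE : ∀ r ∈ Ioi rp,
      ((p r : ℝ) : ℂ) * deriv (fun s : ℝ => ((p s : ℝ) : ℂ) * deriv u s) r
        + (((ω ^ 2 - V r : ℝ)) : ℂ) * u r = 0)
    (hflux : Tendsto (fun r : ℝ => p r * (deriv u r * (starRingEnd ℂ) (u r)).im)
      atTop (nhds 0)) :
    Ξ * a * (m : ℝ) = (rp ^ 2 + a ^ 2) * ω :=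
  stmt_17_general ℓ M a rp hrp Δ hΔ hroot hmax hd Ξ m ω α lam ξ hξ p hp V hV ρ hρ hρ0 u hureg hODE
    hflux
end
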